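/- arXiv:1402.5537 — 6 statements merged into one kernel-verified Lean document; each statement's English description precedes it below -/
import Mathlib

section
/- Let T be a closed, symmetric, G-invariant operator with equal deficiency indices, and let K : N₊ → N₋ be a unitary defining the self-adjoint extension T_K via von Neumann's theorem (D(T_K) = D(T) ⊕ (I + K)N₊, T_K = T† restricted to this domain). If V(g)Kξ = K V(g)ξ for all ξ ∈ N₊ and g ∈ G, then T_K is G-invariant. -/
/-!
Since `V` is unitary, `G`-invariance of a densely defined `T` passes to `T†`.  The extension
`T_K` is a restriction of `T†`, so it is `G`-invariant as soon as `V` preserves its domain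
`D(T) + (I + K) N₊`, which holds because `V` preserves `D(T)` and commutes with `K`.
-/

open scoped InnerProductSpace
open LinearPMap

def GInvariant {H : Type*} [NormedAddCommGroup H] [InnerProductSpace ℂ H]
    {G : Type*} [Group G] (V : G →* (H ≃ₗᵢ[ℂ] H)) (T : H →ₗ.[ℂ] H) : Prop :=
  ∀ g : G, ∀ x : T.domain, ∃ hx : V g (x : H) ∈ T.domain,
    T ⟨V g (x : H), hx⟩ = V g (T x)

/-- The deficiency space `ker (T† - c)` of an unbounded operator, as a set. -/
def deficiencySpace {H : Type*} [NormedAddCommGroup H] [InnerProductSpace ℂ H]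
    [CompleteSpace H] (T : H →ₗ.[ℂ] H) (c : ℂ) : Set H :=
  {φ : H | ∃ hφ : φ ∈ T.adjoint.domain, T.adjoint ⟨φ, hφ⟩ = c • φ}

section GInvariant

variable {H : Type*} [NormedAddCommGroup H] [InnerProductSpace ℂ H] {G : Type*} [Group G]
  {V : G →* (H ≃ₗᵢ[ℂ] H)}

theorem GInvariant.adjoint [CompleteSpace H] {T : H →ₗ.[ℂ] H}
    (hdense : Dense (T.domain : Set H)) (hinv : GInvariant V T) : GInvariant V T† := by
  intro g y
  have hVinv : ∀ z : H, V g⁻¹ z = (V g).symm z := fun z => by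
    rw [map_inv, LinearIsometryEquiv.coe_inv]
  have hformal : ∀ x : T.domain, ⟪V g (T† y), (x : H)⟫_ℂ = ⟪V g (y : H), T x⟫_ℂ := by
    intro x
    obtain ⟨hx, hTx⟩ := hinv g⁻¹ x
    calc ⟪V g (T† y), (x : H)⟫_ℂ = ⟪T† y, V g⁻¹ (x : H)⟫_ℂ := by
          rw [hVinv, LinearIsometryEquiv.inner_map_eq_flip]
      _ = ⟪(y : H), T ⟨V g⁻¹ (x : H), hx⟩⟫_ℂ := adjoint_isFormalAdjoint hdense y ⟨_, hx⟩
      _ = ⟪V g (y : H), T x⟫_ℂ := by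
          rw [hTx, hVinv, LinearIsometryEquiv.inner_map_eq_flip]
  have hy : V g (y : H) ∈ T†.domain := mem_adjoint_domain_of_exists _ ⟨_, hformal⟩
  exact ⟨hy, adjoint_apply_eq hdense ⟨_, hy⟩ hformal⟩

theorem GInvariant.of_le {S T : H →ₗ.[ℂ] H} (hinv : GInvariant V T) (hle : S ≤ T)
    (hdom : ∀ g : G, ∀ x ∈ S.domain, V g x ∈ S.domain) : GInvariant V S := by
  intro g x
  have hx : V g (x : H) ∈ S.domain := hdom g x x.2
  obtain ⟨hxT, hTx⟩ := hinv g ⟨x, hle.1 x.2⟩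
  refine ⟨hx, ?_⟩
  rw [hle.2 (x := ⟨_, hx⟩) (y := ⟨_, hxT⟩) rfl, hTx, hle.2 (x := x) (y := ⟨x, hle.1 x.2⟩) rfl]

end GInvariant

theorem vonNeumann_extension_GInvariant_general {H : Type*} [NormedAddCommGroup H]
    [InnerProductSpace ℂ H] [CompleteSpace H] {G : Type*} [Group G]
    (V : G →* (H ≃ₗᵢ[ℂ] H)) (T : H →ₗ.[ℂ] H)
    (hdense : Dense (T.domain : Set H))
    (hinv : GInvariant V T)
    (Np Nm : Submodule ℂ H)
    (K : Np ≃ₗᵢ[ℂ] Nm)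
    (TK : H →ₗ.[ℂ] H)
    -- `D(T_K) = {φ + ξ + Kξ : φ ∈ D(T), ξ ∈ N₊}`
    (hTKdom : ∀ x : H, x ∈ TK.domain ↔
      ∃ φ ∈ T.domain, ∃ ξ : Np, x = φ + (ξ : H) + (K ξ : H))
    -- `T_K` is the restriction of `T†` to this domain
    (hTKval : ∀ x : TK.domain, ∃ hx : (x : H) ∈ T.adjoint.domain,
      TK x = T.adjoint ⟨(x : H), hx⟩)
    -- `K` commutes with the representation `V`
    (hcomm : ∀ g : G, ∀ ξ : Np, ∃ hξ : V g (ξ : H) ∈ Np,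
      V g (K ξ : H) = (K ⟨V g (ξ : H), hξ⟩ : H)) :
    GInvariant V TK := by
  have hle : TK ≤ T† := ⟨fun x hx => (hTKval ⟨x, hx⟩).1, fun x y hxy => by
    obtain ⟨_, hTKx⟩ := hTKval x
    rw [hTKx]
    congr 1
    exact Subtype.ext hxy⟩
  refine (hinv.adjoint hdense).of_le hle fun g x hx => ?_
  obtain ⟨φ, hφ, ξ, rfl⟩ := (hTKdom x).mp hx
  obtain ⟨hVφ, -⟩ := hinv g ⟨φ, hφ⟩
  obtain ⟨hVξ, hVKξ⟩ := hcomm g ξ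
  exact (hTKdom _).mpr ⟨V g φ, hVφ, ⟨V g ξ, hVξ⟩, by rw [_root_.map_add, _root_.map_add, hVKξ]⟩

/-- Von Neumann theory: let `T` be closed, symmetric and `G`-invariant, let
`K : N₊ → N₋` be a unitary between the deficiency spaces and `T_K` the corresponding
self-adjoint extension (the restriction of `T†` to `D(T) + (I + K) N₊`).  If `K`
commutes with the representation `V`, then `T_K` is `G`-invariant. -/
theorem vonNeumann_extension_GInvariant {H : Type*} [NormedAddCommGroup H]
    [InnerProductSpace ℂ H] [CompleteSpace H] {G : Type*} [Group G]
    (V : G →* (H ≃ₗᵢ[ℂ] H)) (T : H →ₗ.[ℂ] H)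
    (hdense : Dense (T.domain : Set H)) (hclosed : T.IsClosed)
    (hsymm : ∀ x y : T.domain, ⟪T x, (y : H)⟫_ℂ = ⟪(x : H), T y⟫_ℂ)
    (hinv : GInvariant V T)
    (Np Nm : Submodule ℂ H)
    (hNp : (Np : Set H) = deficiencySpace T Complex.I)
    (hNm : (Nm : Set H) = deficiencySpace T (-Complex.I))
    (K : Np ≃ₗᵢ[ℂ] Nm)
    (TK : H →ₗ.[ℂ] H)
    -- `D(T_K) = {φ + ξ + Kξ : φ ∈ D(T), ξ ∈ N₊}`
    (hTKdom : ∀ x : H, x ∈ TK.domain ↔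
      ∃ φ ∈ T.domain, ∃ ξ : Np, x = φ + (ξ : H) + (K ξ : H))
    -- `T_K` is the restriction of `T†` to this domain
    (hTKval : ∀ x : TK.domain, ∃ hx : (x : H) ∈ T.adjoint.domain,
      TK x = T.adjoint ⟨(x : H), hx⟩)
    -- `K` commutes with the representation `V`
    (hcomm : ∀ g : G, ∀ ξ : Np, ∃ hξ : V g (ξ : H) ∈ Np,
      V g (K ξ : H) = (K ⟨V g (ξ : H), hξ⟩ : H)) :
    GInvariant V TK :=
  vonNeumann_extension_GInvariant_general V T hdense hinv Np Nm K TK hTKdom hTKval hcomm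
end

section
/- Let Q be a Hermitean, closed, semi-bounded quadratic form with dense domain D ⊆ H, represented by the self-adjoint semi-bounded operator T (via the representation theorem: Q(φ,ψ) = ⟨φ, Tψ⟩ for φ ∈ D, ψ ∈ D(T)). If Q is G-invariant (V(g)D ⊆ D and Q(V(g)φ) = Q(φ) for all φ ∈ D, g ∈ G), then T is G-invariant. -/
open scoped InnerProductSpace
open LinearPMap

/-- The graph norm `‖φ‖_Q = √(Q(φ,φ) + (1+m)‖φ‖²)` of a quadratic form. -/
noncomputable def qNorm {H : Type*} [NormedAddCommGroup H] [InnerProductSpace ℂ H]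
    {D : Submodule ℂ H} (m : ℝ) (Q : D →ₗ⋆[ℂ] D →ₗ[ℂ] ℂ) (φ : D) : ℝ :=
  Real.sqrt ((Q φ φ).re + (1 + m) * ‖(φ : H)‖ ^ 2)

/-!
Transporting the representation identity `Q(φ, ψ) = ⟪φ, Tψ⟫` along `V g` gives
`Q(φ, V g ψ) = Q(V g⁻¹ φ, ψ) = ⟪V g⁻¹ φ, Tψ⟫ = ⟪φ, V g Tψ⟫` for every `φ ∈ D`, where the first
step is the invariance of the diagonal of `Q` polarized to all of `Q`. By the maximality of the
domain of the representing operator, `V g ψ ∈ D(T)`, and density of `D` identifies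
`T (V g ψ)` with `V g (T ψ)`.
-/

namespace LinearMap

variable {E : Type*} [AddCommGroup E] [Module ℂ E]

theorem sesq_polarization (B : E →ₗ⋆[ℂ] E →ₗ[ℂ] ℂ) (x y : E) :
    B x y = (B (x + y) (x + y) - B (x - y) (x - y)
      - Complex.I * B (x + Complex.I • y) (x + Complex.I • y)
      + Complex.I * B (x - Complex.I • y) (x - Complex.I • y)) / 4 := by
  simp only [_root_.map_add, _root_.map_sub, MulActionSemiHomClass.map_smulₛₗ, add_apply,
    sub_apply, smul_apply, smul_eq_mul, Complex.conj_I]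
  linear_combination (B x y - B y x) / 2 * Complex.I_sq

theorem sesq_map_map_of_forall_map_self (B : E →ₗ⋆[ℂ] E →ₗ[ℂ] ℂ) (f : E →ₗ[ℂ] E)
    (hf : ∀ x, B (f x) (f x) = B x x) (x y : E) : B (f x) (f y) = B x y := by
  rw [sesq_polarization B (f x), sesq_polarization B x]
  simp only [← map_smul f, ← map_add f, ← map_sub f, hf]

end LinearMap

section RepresentingOperator

variable {H : Type*} [NormedAddCommGroup H] [InnerProductSpace ℂ H] {D : Submodule ℂ H}
  {Q : D →ₗ⋆[ℂ] D →ₗ[ℂ] ℂ} {T : H →ₗ.[ℂ] H} {hTD : T.domain ≤ D}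

theorem exists_mem_domain_apply_eq_of_forall_form_eq_inner (hD : Dense (D : Set H))
    (hrep : ∀ ψ : T.domain, ∀ φ : D, Q φ ⟨(ψ : H), hTD ψ.2⟩ = ⟪(φ : H), T ψ⟫_ℂ)
    (hmax : ∀ ψ : D, (∃ χ : H, ∀ φ : D, Q φ ψ = ⟪(φ : H), χ⟫_ℂ) → (ψ : H) ∈ T.domain)
    {ψ : D} {χ : H} (hχ : ∀ φ : D, Q φ ψ = ⟪(φ : H), χ⟫_ℂ) :
    ∃ hψ : (ψ : H) ∈ T.domain, T ⟨ψ, hψ⟩ = χ := by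
  have hψ := hmax ψ ⟨χ, hχ⟩
  refine ⟨hψ, hD.eq_of_inner_right ℂ fun φ hφ => ?_⟩
  rw [← hrep ⟨ψ, hψ⟩ ⟨φ, hφ⟩, hχ ⟨φ, hφ⟩]

theorem exists_mem_domain_apply_eq_of_form_invariant (hD : Dense (D : Set H))
    (hrep : ∀ ψ : T.domain, ∀ φ : D, Q φ ⟨(ψ : H), hTD ψ.2⟩ = ⟪(φ : H), T ψ⟫_ℂ)
    (hmax : ∀ ψ : D, (∃ χ : H, ∀ φ : D, Q φ ψ = ⟪(φ : H), χ⟫_ℂ) → (ψ : H) ∈ T.domain)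
    (U : H ≃ₗᵢ[ℂ] H) (hUD : ∀ φ ∈ D, U φ ∈ D) (hUsymmD : ∀ φ ∈ D, U.symm φ ∈ D)
    (hQU : ∀ φ : D, Q ⟨U φ, hUD φ φ.2⟩ ⟨U φ, hUD φ φ.2⟩ = Q φ φ) (ψ : T.domain) :
    ∃ hψ : U (ψ : H) ∈ T.domain, T ⟨U ψ, hψ⟩ = U (T ψ) := by
  let u : D →ₗ[ℂ] D := U.toLinearMap.restrict hUD
  have hQu := LinearMap.sesq_map_map_of_forall_map_self Q u hQU
  refine exists_mem_domain_apply_eq_of_forall_form_eq_inner (ψ := u ⟨ψ, hTD ψ.2⟩) hD hrep hmax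
    fun φ => ?_
  let φ' : D := ⟨U.symm φ, hUsymmD φ φ.2⟩
  have hφ : u φ' = φ := Subtype.ext (U.apply_symm_apply φ)
  calc Q φ (u ⟨ψ, hTD ψ.2⟩) = Q φ' ⟨ψ, hTD ψ.2⟩ := by rw [← hφ, hQu]
    _ = ⟪U.symm φ, T ψ⟫_ℂ := hrep ψ φ'
    _ = ⟪(φ : H), U (T ψ)⟫_ℂ := by rw [← U.inner_map_map, U.apply_symm_apply]

end RepresentingOperator

theorem representing_operator_GInvariant_general {H : Type*} [NormedAddCommGroup H]
    [InnerProductSpace ℂ H] {G : Type*} [Group G]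
    (V : G →* (H ≃ₗᵢ[ℂ] H)) (D : Submodule ℂ H) (hD : Dense (D : Set H))
    (Q : D →ₗ⋆[ℂ] D →ₗ[ℂ] ℂ)
    -- `T` is the self-adjoint operator representing `Q`
    (T : H →ₗ.[ℂ] H)
    (hTD : T.domain ≤ D)
    (hrep : ∀ ψ : T.domain, ∀ φ : D, Q φ ⟨(ψ : H), hTD ψ.2⟩ = ⟪(φ : H), T ψ⟫_ℂ)
    (hmax : ∀ ψ : D, (∃ χ : H, ∀ φ : D, Q φ ψ = ⟪(φ : H), χ⟫_ℂ) → (ψ : H) ∈ T.domain)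
    -- `Q` is `G`-invariant
    (hVD : ∀ (g : G) (φ : D), V g (φ : H) ∈ D)
    (hQinv : ∀ (g : G) (φ : D),
      Q ⟨V g (φ : H), hVD g φ⟩ ⟨V g (φ : H), hVD g φ⟩ = Q φ φ) :
    GInvariant V T := by
  intro g
  have hVinvD : ∀ φ ∈ D, (V g).symm φ ∈ D := fun φ hφ => by
    simpa [map_inv, LinearIsometryEquiv.coe_inv] using hVD g⁻¹ ⟨φ, hφ⟩
  exact exists_mem_domain_apply_eq_of_form_invariant hD hrep hmax (V g)
    (fun φ hφ => hVD g ⟨φ, hφ⟩) hVinvD (hQinv g)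

/-- If a Hermitean, closed, semi-bounded quadratic form `Q` is `G`-invariant, then the
self-adjoint operator `T` representing it is `G`-invariant. -/
theorem representing_operator_GInvariant {H : Type*} [NormedAddCommGroup H]
    [InnerProductSpace ℂ H] [CompleteSpace H] {G : Type*} [Group G]
    (V : G →* (H ≃ₗᵢ[ℂ] H)) (D : Submodule ℂ H) (hD : Dense (D : Set H))
    (Q : D →ₗ⋆[ℂ] D →ₗ[ℂ] ℂ)
    -- `Q` is Hermitean
    (hherm : ∀ φ ψ : D, Q φ ψ = starRingEnd ℂ (Q ψ φ))
    -- `Q` is semi-bounded from below with bound `m ≥ 0`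
    (m : ℝ) (hm : 0 ≤ m)
    (hbound : ∀ φ : D, (Q φ φ).re ≥ -m * ‖(φ : H)‖ ^ 2)
    -- `Q` is closed: every `‖·‖_Q`-Cauchy sequence in `D` converges in `‖·‖_Q` to a point of `D`
    (hclosed : ∀ f : ℕ → D,
      (∀ ε > 0, ∃ N, ∀ p ≥ N, ∀ q ≥ N, qNorm m Q (f p - f q) < ε) →
      ∃ φ : D, Filter.Tendsto (fun n => qNorm m Q (f n - φ)) Filter.atTop (nhds 0))
    -- `T` is the self-adjoint operator representing `Q`
    (T : H →ₗ.[ℂ] H)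
    (hTD : T.domain ≤ D)
    (hrep : ∀ ψ : T.domain, ∀ φ : D, Q φ ⟨(ψ : H), hTD ψ.2⟩ = ⟪(φ : H), T ψ⟫_ℂ)
    (hmax : ∀ ψ : D, (∃ χ : H, ∀ φ : D, Q φ ψ = ⟪(φ : H), χ⟫_ℂ) → (ψ : H) ∈ T.domain)
    -- `Q` is `G`-invariant
    (hVD : ∀ (g : G) (φ : D), V g (φ : H) ∈ D)
    (hQinv : ∀ (g : G) (φ : D),
      Q ⟨V g (φ : H), hVD g φ⟩ ⟨V g (φ : H), hVD g φ⟩ = Q φ φ) :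
    GInvariant V T :=
  representing_operator_GInvariant_general V D hD Q T hTD hrep hmax hVD hQinv
end

section
/- Let Q be a Hermitean, closed, semi-bounded quadratic form with dense domain D, represented by the self-adjoint operator T. If T is G-invariant, then Q is G-invariant: V(g)D ⊆ D and Q(V(g)φ) = Q(φ) for all φ ∈ D, g ∈ G. -/
/-!
Since `T` represents `Q`, on `D(T)` one has `Q(V(g)ψ) = ⟪V(g)ψ, T V(g)ψ⟫ = ⟪V(g)ψ, V(g)Tψ⟫ = Q(ψ)`,
so `V(g)` is an isometry of `D(T)` for the graph norm `‖·‖_Q`. Approximating `φ ∈ D` in `‖·‖_Q` by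
`ψₙ ∈ D(T)`, the images `V(g)ψₙ` form a `‖·‖_Q`-Cauchy sequence; by closedness it converges in
`‖·‖_Q` to some `χ ∈ D`, hence also in `H` because `‖·‖ ≤ ‖·‖_Q`, and so `χ = V(g)φ`. Finally `Q` is
continuous for `‖·‖_Q`, whence `Q(V(g)φ) = lim Q(V(g)ψₙ) = lim Q(ψₙ) = Q(φ)`.
-/

open scoped InnerProductSpace
open LinearPMap

open Filter Topology

section ClosedForm

variable {H : Type*} [NormedAddCommGroup H] [InnerProductSpace ℂ H] {D : Submodule ℂ H}
  {m : ℝ} {Q : D →ₗ⋆[ℂ] D →ₗ[ℂ] ℂ}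

def IsHermitianForm (Q : D →ₗ⋆[ℂ] D →ₗ[ℂ] ℂ) : Prop :=
  ∀ φ ψ : D, Q φ ψ = starRingEnd ℂ (Q ψ φ)

def IsFormLowerBound (m : ℝ) (Q : D →ₗ⋆[ℂ] D →ₗ[ℂ] ℂ) : Prop :=
  ∀ φ : D, (Q φ φ).re ≥ -m * ‖(φ : H)‖ ^ 2

theorem norm_sq_le_re_add (hbound : IsFormLowerBound m Q) (φ : D) :
    ‖(φ : H)‖ ^ 2 ≤ (Q φ φ).re + (1 + m) * ‖(φ : H)‖ ^ 2 := by
  linarith [hbound φ]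

theorem norm_le_qNorm (hbound : IsFormLowerBound m Q) (φ : D) :
    ‖(φ : H)‖ ≤ qNorm m Q φ :=
  Real.le_sqrt_of_sq_le (norm_sq_le_re_add hbound φ)

theorem re_apply_self_eq (hbound : IsFormLowerBound m Q) (φ : D) :
    (Q φ φ).re = qNorm m Q φ ^ 2 - (1 + m) * ‖(φ : H)‖ ^ 2 := by
  rw [qNorm, Real.sq_sqrt ((sq_nonneg _).trans (norm_sq_le_re_add hbound φ))]
  ring

theorem im_apply_self (hherm : IsHermitianForm Q) (φ : D) :
    (Q φ φ).im = 0 :=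
  Complex.conj_eq_iff_im.mp (hherm φ φ).symm

theorem qNorm_eq_of_apply_self_eq {φ ψ : D} (hQ : Q φ φ = Q ψ ψ) (hnorm : ‖(φ : H)‖ = ‖(ψ : H)‖) :
    qNorm m Q φ = qNorm m Q ψ := by
  rw [qNorm, qNorm, hQ, hnorm]

noncomputable def formInner (m : ℝ) (Q : D →ₗ⋆[ℂ] D →ₗ[ℂ] ℂ) (φ ψ : D) : ℂ :=
  Q φ ψ + ((1 + m : ℝ) : ℂ) * ⟪(φ : H), (ψ : H)⟫_ℂ

theorem re_formInner_self (φ : D) :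
    RCLike.re (formInner m Q φ φ) = (Q φ φ).re + (1 + m) * ‖(φ : H)‖ ^ 2 := by
  rw [formInner, RCLike.re_to_complex, Complex.add_re, Complex.re_ofReal_mul,
    inner_self_eq_norm_sq_to_K]
  norm_cast

@[reducible]
noncomputable def formInnerCore (hherm : IsHermitianForm Q)
    (hbound : IsFormLowerBound m Q) : PreInnerProductSpace.Core ℂ D where
  inner := formInner m Q
  conj_inner_symm φ ψ := by
    simp only [formInner, _root_.map_add, map_mul, Complex.conj_ofReal, inner_conj_symm,
      ← hherm φ ψ]
  re_inner_nonneg φ := by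
    rw [re_formInner_self]
    exact (sq_nonneg _).trans (norm_sq_le_re_add hbound φ)
  add_left φ ψ χ := by
    simp only [formInner, _root_.map_add, LinearMap.add_apply, Submodule.coe_add, inner_add_left]
    ring
  smul_left φ ψ c := by
    simp only [formInner, LinearMap.map_smulₛₗ, LinearMap.smul_apply, smul_eq_mul,
      Submodule.coe_smul, inner_smul_left]
    ring

/-- The triangle inequality is Cauchy–Schwarz for `formInner`. -/
noncomputable def qNormSeminorm (hherm : IsHermitianForm Q)
    (hbound : IsFormLowerBound m Q) : AddGroupSeminorm D where
  toFun := qNorm m Q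
  map_zero' := by simp [qNorm]
  neg' φ := by simp [qNorm]
  add_le' φ ψ := by
    simp only [qNorm, ← re_formInner_self]
    exact @norm_add_le D (InnerProductSpace.Core.toSeminormedAddCommGroup
      (c := formInnerCore hherm hbound)).toSeminormedAddGroup φ ψ

theorem qNormSeminorm_apply (hherm : IsHermitianForm Q)
    (hbound : IsFormLowerBound m Q) (φ : D) :
    qNormSeminorm hherm hbound φ = qNorm m Q φ :=
  rfl

section Convergence

variable {ι : Type*} {l : Filter ι} {f : ι → D} {φ : D}

theorem tendsto_coe_of_tendsto_qNorm (hbound : IsFormLowerBound m Q)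
    (h : Tendsto (fun n => qNorm m Q (f n - φ)) l (𝓝 0)) :
    Tendsto (fun n => (f n : H)) l (𝓝 φ) := by
  rw [tendsto_iff_norm_sub_tendsto_zero]
  exact squeeze_zero (fun _ => norm_nonneg _) (fun n => norm_le_qNorm hbound (f n - φ)) h

theorem tendsto_qNorm_of_tendsto_qNorm_sub (hherm : IsHermitianForm Q)
    (hbound : IsFormLowerBound m Q)
    (h : Tendsto (fun n => qNorm m Q (f n - φ)) l (𝓝 0)) :
    Tendsto (fun n => qNorm m Q (f n)) l (𝓝 (qNorm m Q φ)) := by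
  rw [tendsto_iff_norm_sub_tendsto_zero]
  refine squeeze_zero (fun _ => norm_nonneg _) (fun n => ?_) h
  simpa only [Real.norm_eq_abs, qNormSeminorm_apply] using
    abs_sub_map_le_sub (qNormSeminorm hherm hbound) (f n) φ

theorem tendsto_re_apply_self_of_tendsto_qNorm (hherm : IsHermitianForm Q)
    (hbound : IsFormLowerBound m Q)
    (h : Tendsto (fun n => qNorm m Q (f n - φ)) l (𝓝 0)) :
    Tendsto (fun n => (Q (f n) (f n)).re) l (𝓝 (Q φ φ).re) := by
  simp only [re_apply_self_eq hbound]
  exact ((tendsto_qNorm_of_tendsto_qNorm_sub hherm hbound h).pow 2).sub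
    (((tendsto_coe_of_tendsto_qNorm hbound h).norm.pow 2).const_mul _)

end Convergence

theorem qNorm_cauchy_of_tendsto (hherm : IsHermitianForm Q)
    (hbound : IsFormLowerBound m Q) {f : ℕ → D} {φ : D}
    (h : Tendsto (fun n => qNorm m Q (f n - φ)) atTop (𝓝 0)) :
    ∀ ε > 0, ∃ N, ∀ p ≥ N, ∀ q ≥ N, qNorm m Q (f p - f q) < ε := by
  intro ε hε
  obtain ⟨N, hN⟩ := eventually_atTop.mp (h.eventually (gt_mem_nhds (half_pos hε)))
  refine ⟨N, fun p hp q hq => ?_⟩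
  let ν := qNormSeminorm hherm hbound
  calc ν (f p - f q) ≤ ν (f p - φ) + ν (φ - f q) := le_map_sub_add_map_sub ν _ _ _
    _ = ν (f p - φ) + ν (f q - φ) := by rw [map_sub_rev ν φ]
    _ < ε / 2 + ε / 2 := add_lt_add (hN p hp) (hN q hq)
    _ = ε := add_halves ε

theorem exists_seq_tendsto_qNorm_of_core (hherm : IsHermitianForm Q)
    (hbound : IsFormLowerBound m Q) {S : Submodule ℂ H} (hSD : S ≤ D)
    (hcore : ∀ φ : D, ∀ ε > (0:ℝ), ∃ ψ : S, qNorm m Q (φ - ⟨(ψ : H), hSD ψ.2⟩) < ε) (φ : D) :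
    ∃ ψ : ℕ → S, Tendsto (fun n => qNorm m Q (⟨(ψ n : H), hSD (ψ n).2⟩ - φ)) atTop (𝓝 0) := by
  choose ψ hψ using fun n : ℕ => hcore φ (1 / (n + 1)) Nat.one_div_pos_of_nat
  refine ⟨ψ, squeeze_zero (fun _ => Real.sqrt_nonneg _) (fun n => ?_)
    tendsto_one_div_add_atTop_nhds_zero_nat⟩
  rw [← qNormSeminorm_apply hherm hbound, map_sub_rev]
  exact (hψ n).le

theorem exists_mem_apply_self_eq_of_core (hherm : IsHermitianForm Q)
    (hbound : IsFormLowerBound m Q)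
    (hclosed : ∀ f : ℕ → D, (∀ ε > 0, ∃ N, ∀ p ≥ N, ∀ q ≥ N, qNorm m Q (f p - f q) < ε) →
      ∃ φ : D, Tendsto (fun n => qNorm m Q (f n - φ)) atTop (𝓝 0))
    {S : Submodule ℂ H} (hSD : S ≤ D)
    (hcore : ∀ φ : D, ∀ ε > (0:ℝ), ∃ ψ : S, qNorm m Q (φ - ⟨(ψ : H), hSD ψ.2⟩) < ε)
    (U : H →ₗᵢ[ℂ] H) (hUS : ∀ ψ : S, U ψ ∈ D)
    (hUQ : ∀ ψ : S, Q ⟨U ψ, hUS ψ⟩ ⟨U ψ, hUS ψ⟩ = Q ⟨ψ, hSD ψ.2⟩ ⟨ψ, hSD ψ.2⟩) (φ : D) :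
    ∃ hφ : U φ ∈ D, Q ⟨U φ, hφ⟩ ⟨U φ, hφ⟩ = Q φ φ := by
  let W : S →ₗ[ℂ] D := (U.toLinearMap.comp S.subtype).codRestrict D hUS
  let ι : S →ₗ[ℂ] D := Submodule.inclusion hSD
  have hWι : ∀ ψ ψ' : S, qNorm m Q (W ψ - W ψ') = qNorm m Q (ι ψ - ι ψ') := fun ψ ψ' => by
    rw [← _root_.map_sub, ← _root_.map_sub]
    exact qNorm_eq_of_apply_self_eq (hUQ (ψ - ψ')) (U.norm_map _)
  obtain ⟨ψ, hψ⟩ := exists_seq_tendsto_qNorm_of_core hherm hbound hSD hcore φ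
  obtain ⟨χ, hχ⟩ := hclosed (fun n => W (ψ n)) <| by
    simp only [hWι]
    exact qNorm_cauchy_of_tendsto hherm hbound hψ
  have hUφ : U φ = χ := tendsto_nhds_unique
    ((U.continuous.tendsto _).comp (tendsto_coe_of_tendsto_qNorm hbound hψ))
    (tendsto_coe_of_tendsto_qNorm hbound hχ)
  refine ⟨hUφ ▸ χ.2, ?_⟩
  rw [show (⟨U φ, hUφ ▸ χ.2⟩ : D) = χ from Subtype.ext hUφ]
  refine Complex.ext ?_ (by rw [im_apply_self hherm, im_apply_self hherm])
  exact tendsto_nhds_unique (tendsto_re_apply_self_of_tendsto_qNorm hherm hbound hχ)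
    ((tendsto_re_apply_self_of_tendsto_qNorm hherm hbound hψ).congr fun n =>
      congrArg Complex.re (hUQ (ψ n)).symm)

end ClosedForm

theorem apply_map_self_eq_of_commute {H : Type*} [NormedAddCommGroup H] [InnerProductSpace ℂ H]
    {D : Submodule ℂ H} {Q : D →ₗ⋆[ℂ] D →ₗ[ℂ] ℂ} {T : H →ₗ.[ℂ] H} (hTD : T.domain ≤ D)
    (hrep : ∀ ψ : T.domain, ∀ φ : D, Q φ ⟨(ψ : H), hTD ψ.2⟩ = ⟪(φ : H), T ψ⟫_ℂ)
    (U : H →ₗᵢ[ℂ] H) (ψ : T.domain) (hUψ : U ψ ∈ T.domain) (hTU : T ⟨U ψ, hUψ⟩ = U (T ψ)) :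
    Q ⟨U ψ, hTD hUψ⟩ ⟨U ψ, hTD hUψ⟩ = Q ⟨ψ, hTD ψ.2⟩ ⟨ψ, hTD ψ.2⟩ := by
  rw [hrep ⟨U ψ, hUψ⟩, hrep ψ, hTU, LinearIsometry.inner_map_map]

theorem quadraticForm_GInvariant_of_operator_general {H : Type*} [NormedAddCommGroup H]
    [InnerProductSpace ℂ H] {G : Type*} [Group G]
    (V : G →* (H ≃ₗᵢ[ℂ] H)) (D : Submodule ℂ H)
    (Q : D →ₗ⋆[ℂ] D →ₗ[ℂ] ℂ)
    -- `Q` is Hermitean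
    (hherm : ∀ φ ψ : D, Q φ ψ = starRingEnd ℂ (Q ψ φ))
    -- `Q` is semi-bounded from below with bound `m ≥ 0`
    (m : ℝ)
    (hbound : ∀ φ : D, (Q φ φ).re ≥ -m * ‖(φ : H)‖ ^ 2)
    -- `Q` is closed: every `‖·‖_Q`-Cauchy sequence in `D` converges in `‖·‖_Q` to a point of `D`
    (hclosed : ∀ f : ℕ → D,
      (∀ ε > 0, ∃ N, ∀ p ≥ N, ∀ q ≥ N, qNorm m Q (f p - f q) < ε) →
      ∃ φ : D, Filter.Tendsto (fun n => qNorm m Q (f n - φ)) Filter.atTop (nhds 0))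
    -- `T` is the self-adjoint operator representing `Q`
    (T : H →ₗ.[ℂ] H)
    (hTD : T.domain ≤ D)
    (hrep : ∀ ψ : T.domain, ∀ φ : D, Q φ ⟨(ψ : H), hTD ψ.2⟩ = ⟪(φ : H), T ψ⟫_ℂ)
    -- `D(T)` is a form core for `Q`
    (hcore : ∀ φ : D, ∀ ε > (0:ℝ), ∃ ψ : T.domain,
      qNorm m Q (φ - ⟨(ψ : H), hTD ψ.2⟩) < ε)
    -- `T` is `G`-invariant
    (hTinv : GInvariant V T) :
    -- then `Q` is `G`-invariant
    ∀ (g : G) (φ : D), ∃ hφ : V g (φ : H) ∈ D,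
      Q ⟨V g (φ : H), hφ⟩ ⟨V g (φ : H), hφ⟩ = Q φ φ := by
  intro g
  choose hmem hcomm using hTinv g
  exact exists_mem_apply_self_eq_of_core hherm hbound hclosed hTD hcore (V g).toLinearIsometry
    (fun ψ => hTD (hmem ψ))
    (fun ψ => apply_map_self_eq_of_commute hTD hrep (V g).toLinearIsometry ψ (hmem ψ) (hcomm ψ))

/-- If the self-adjoint operator `T` representing a Hermitean, closed, semi-bounded
quadratic form `Q` is `G`-invariant, then `Q` is `G`-invariant. -/
theorem quadraticForm_GInvariant_of_operator {H : Type*} [NormedAddCommGroup H]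
    [InnerProductSpace ℂ H] [CompleteSpace H] {G : Type*} [Group G]
    (V : G →* (H ≃ₗᵢ[ℂ] H)) (D : Submodule ℂ H) (hD : Dense (D : Set H))
    (Q : D →ₗ⋆[ℂ] D →ₗ[ℂ] ℂ)
    -- `Q` is Hermitean
    (hherm : ∀ φ ψ : D, Q φ ψ = starRingEnd ℂ (Q ψ φ))
    -- `Q` is semi-bounded from below with bound `m ≥ 0`
    (m : ℝ) (hm : 0 ≤ m)
    (hbound : ∀ φ : D, (Q φ φ).re ≥ -m * ‖(φ : H)‖ ^ 2)
    -- `Q` is closed: every `‖·‖_Q`-Cauchy sequence in `D` converges in `‖·‖_Q` to a point of `D`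
    (hclosed : ∀ f : ℕ → D,
      (∀ ε > 0, ∃ N, ∀ p ≥ N, ∀ q ≥ N, qNorm m Q (f p - f q) < ε) →
      ∃ φ : D, Filter.Tendsto (fun n => qNorm m Q (f n - φ)) Filter.atTop (nhds 0))
    -- `T` is the self-adjoint operator representing `Q`
    (T : H →ₗ.[ℂ] H)
    (hTD : T.domain ≤ D)
    (hrep : ∀ ψ : T.domain, ∀ φ : D, Q φ ⟨(ψ : H), hTD ψ.2⟩ = ⟪(φ : H), T ψ⟫_ℂ)
    (hmax : ∀ ψ : D, (∃ χ : H, ∀ φ : D, Q φ ψ = ⟪(φ : H), χ⟫_ℂ) → (ψ : H) ∈ T.domain)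
    -- `D(T)` is a form core for `Q`
    (hcore : ∀ φ : D, ∀ ε > (0:ℝ), ∃ ψ : T.domain,
      qNorm m Q (φ - ⟨(ψ : H), hTD ψ.2⟩) < ε)
    -- `T` is `G`-invariant
    (hTinv : GInvariant V T) :
    -- then `Q` is `G`-invariant
    ∀ (g : G) (φ : D), ∃ hφ : V g (φ : H) ∈ D,
      Q ⟨V g (φ : H), hφ⟩ ⟨V g (φ : H), hφ⟩ = Q φ φ :=
  quadraticForm_GInvariant_of_operator_general V D Q hherm m hbound hclosed T hTD hrep hcore hTinv
end

section
/- Let T be a closed, symmetric operator on H. Then T is G-invariant with respect to a unitary representation V if and only if T is affiliated to the commutant von Neumann algebra V' = {V(g) : g ∈ G}', i.e., W*(T) = ({T}' ∩ {T†}')' ⊆ V'. -/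
open scoped InnerProductSpace
open LinearPMap

/-- The commutant (in `L(H)`) of a set of bounded operators. -/
def boundedCommutant {H : Type*} [NormedAddCommGroup H] [NormedSpace ℂ H]
    (S : Set (H →L[ℂ] H)) : Set (H →L[ℂ] H) :=
  {A | ∀ B ∈ S, A * B = B * A}

/-- The commutant of a (possibly unbounded) operator `T`: the bounded operators mapping
the domain of `T` into itself and commuting with `T` on it (`TA ⊇ AT`). -/
def pmapCommutant {H : Type*} [NormedAddCommGroup H] [InnerProductSpace ℂ H]
    (T : H →ₗ.[ℂ] H) : Set (H →L[ℂ] H) :=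
  {A | ∀ x : T.domain, ∃ hx : A (x : H) ∈ T.domain, T ⟨A (x : H), hx⟩ = A (T x)}

/-- The von Neumann algebra of bounded components of `T`:
`W*(T) = ({T}' ∩ {T†}')'`. -/
def Wstar {H : Type*} [NormedAddCommGroup H] [InnerProductSpace ℂ H] [CompleteSpace H]
    (T : H →ₗ.[ℂ] H) : Set (H →L[ℂ] H) :=
  boundedCommutant (pmapCommutant T ∩ pmapCommutant T.adjoint)

/-! Everything happens on the graph `Γ(T)` of `T` inside `H ⊕ H`. A bounded `A` lies in `{T}'` iff
`A ⊕ A` leaves `Γ(T)` invariant, and in `{T†}'` iff `A ⊕ A` leaves `Γ(T)ᗮ` invariant, i.e. (as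
`Γ(T)` is closed) iff `A†` lies in `{T}'`. So for `A ∈ {T}' ∩ {T†}'` the operator `A ⊕ A` commutes
with the projection `P` onto `Γ(T)`, which puts the four matrix entries of `P` into `W*(T)`. If
`V g` commutes with `W*(T)`, it commutes with these entries, so `V g ⊕ V g` commutes with `P` and
leaves `Γ(T)` invariant. Conversely, a unitary `U ∈ {T}'` has `U† = U⁻¹ ∈ {T}'`, hence `U ∈ {T†}'`,
so `U` commutes with `W*(T)`. -/

open ContinuousLinearMap Module.End WithLp

section Projection

variable {𝕜 E : Type*} [RCLike 𝕜] [NormedAddCommGroup E] [InnerProductSpace 𝕜 E]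

theorem Submodule.commute_starProjection_iff {K : Submodule 𝕜 E} [K.HasOrthogonalProjection]
    {B : E →L[𝕜] E} :
    Commute K.starProjection B ↔ K ∈ invtSubmodule (B : E →ₗ[𝕜] E) ∧
      Kᗮ ∈ invtSubmodule (B : E →ₗ[𝕜] E) := by
  rw [(K.isIdempotentElem_starProjection).commute_iff, K.range_starProjection,
    K.ker_starProjection]

end Projection

section Diagonal

variable {H : Type*} [NormedAddCommGroup H] [InnerProductSpace ℂ H]

noncomputable def diagonalL2 (A : H →L[ℂ] H) : WithLp 2 (H × H) →L[ℂ] WithLp 2 (H × H) :=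
  (prodContinuousLinearEquiv 2 ℂ H H).symm ∘L A.prodMap A ∘L prodContinuousLinearEquiv 2 ℂ H H

@[simp]
theorem ofLp_diagonalL2 (A : H →L[ℂ] H) (z : WithLp 2 (H × H)) :
    ofLp (diagonalL2 A z) = (A (ofLp z).1, A (ofLp z).2) :=
  rfl

@[simp]
theorem diagonalL2_toLp (A : H →L[ℂ] H) (p : H × H) :
    diagonalL2 A (toLp 2 p) = toLp 2 (A p.1, A p.2) :=
  rfl

theorem comp_comp_mem_boundedCommutant {S : Set (H →L[ℂ] H)}
    {B : WithLp 2 (H × H) →L[ℂ] WithLp 2 (H × H)} (hB : ∀ A ∈ S, Commute B (diagonalL2 A))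
    {pr : WithLp 2 (H × H) →L[ℂ] H} (hpr : ∀ A z, pr (diagonalL2 A z) = A (pr z))
    {io : H →L[ℂ] WithLp 2 (H × H)} (hio : ∀ A a, diagonalL2 A (io a) = io (A a)) :
    pr ∘L B ∘L io ∈ boundedCommutant S := fun A hA => ContinuousLinearMap.ext fun x =>
  calc pr (B (io (A x))) = pr (B (diagonalL2 A (io x))) := by rw [hio]
    _ = pr (diagonalL2 A (B (io x))) := congrArg pr (DFunLike.congr_fun (hB A hA).eq _)
    _ = A (pr (B (io x))) := hpr _ _

theorem commute_diagonalL2_of_mem_boundedCommutant_boundedCommutant {S : Set (H →L[ℂ] H)}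
    {B : WithLp 2 (H × H) →L[ℂ] WithLp 2 (H × H)} (hB : ∀ A ∈ S, Commute B (diagonalL2 A))
    {U : H →L[ℂ] H} (hU : U ∈ boundedCommutant (boundedCommutant S)) :
    Commute B (diagonalL2 U) := by
  have entry {pr : WithLp 2 (H × H) →L[ℂ] H} (hpr : ∀ A z, pr (diagonalL2 A z) = A (pr z))
      {io : H →L[ℂ] WithLp 2 (H × H)} (hio : ∀ A a, diagonalL2 A (io a) = io (A a)) (a : H) :
      pr (B (io (U a))) = U (pr (B (io a))) :=
    (DFunLike.congr_fun (hU _ (comp_comp_mem_boundedCommutant hB hpr hio)) a).symm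
  set e := prodContinuousLinearEquiv 2 ℂ H H
  set inl : H →L[ℂ] WithLp 2 (H × H) := e.symm ∘L ContinuousLinearMap.inl ℂ H H
  set inr : H →L[ℂ] WithLp 2 (H × H) := e.symm ∘L ContinuousLinearMap.inr ℂ H H
  have hinl (A : H →L[ℂ] H) (a : H) : diagonalL2 A (inl a) = inl (A a) := by simp [inl, e]
  have hinr (A : H →L[ℂ] H) (a : H) : diagonalL2 A (inr a) = inr (A a) := by simp [inr, e]
  have hfst (A : H →L[ℂ] H) (z) : fstL 2 ℂ H H (diagonalL2 A z) = A (fstL 2 ℂ H H z) := rfl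
  have hsnd (A : H →L[ℂ] H) (z) : sndL 2 ℂ H H (diagonalL2 A z) = A (sndL 2 ℂ H H z) := rfl
  have hz (z : WithLp 2 (H × H)) : z = inl (ofLp z).1 + inr (ofLp z).2 := by
    apply ofLp_injective; ext <;> simp [inl, inr, e]
  have hUz (z : WithLp 2 (H × H)) :
      diagonalL2 U z = inl (U (ofLp z).1) + inr (U (ofLp z).2) := by
    conv_lhs => rw [hz z]
    rw [_root_.map_add, hinl, hinr]
  refine ContinuousLinearMap.ext fun z => ofLp_injective _ (Prod.ext ?_ ?_)
  · change fstL 2 ℂ H H (B (diagonalL2 U z)) = U (fstL 2 ℂ H H (B z))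
    conv_rhs => rw [hz z]
    simp only [hUz, _root_.map_add, entry hfst hinl, entry hfst hinr]
  · change sndL 2 ℂ H H (B (diagonalL2 U z)) = U (sndL 2 ℂ H H (B z))
    conv_rhs => rw [hz z]
    simp only [hUz, _root_.map_add, entry hsnd hinl, entry hsnd hinr]

end Diagonal

section Graph

variable {H : Type*} [NormedAddCommGroup H] [InnerProductSpace ℂ H]

noncomputable def graphL2 (T : H →ₗ.[ℂ] H) : Submodule ℂ (WithLp 2 (H × H)) :=
  T.graph.comap (WithLp.linearEquiv 2 ℂ (H × H)).toLinearMap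

@[simp]
theorem mem_graphL2_iff {T : H →ₗ.[ℂ] H} {z : WithLp 2 (H × H)} :
    z ∈ graphL2 T ↔ ofLp z ∈ T.graph :=
  Iff.rfl

theorem isClosed_graphL2 {T : H →ₗ.[ℂ] H} (hT : T.IsClosed) :
    IsClosed (graphL2 T : Set (WithLp 2 (H × H))) :=
  hT.preimage (prod_continuous_ofLp 2 H H)

theorem mem_pmapCommutant_iff_mem_invtSubmodule {T : H →ₗ.[ℂ] H} {A : H →L[ℂ] H} :
    A ∈ pmapCommutant T ↔ graphL2 T ∈ invtSubmodule (diagonalL2 A : _ →ₗ[ℂ] _) := by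
  rw [mem_invtSubmodule_iff_forall_mem_of_mem]
  constructor
  · rintro hA z hz
    obtain ⟨y, hy₁, hy₂⟩ := T.mem_graph_iff.mp hz
    obtain ⟨hAy, hTAy⟩ := hA y
    refine T.mem_graph_iff.mpr ⟨⟨A y, hAy⟩, ?_, ?_⟩
    · simp [hy₁]
    · simp [hTAy, hy₂]
  · intro hA x
    obtain ⟨y, hy₁, hy₂⟩ := T.mem_graph_iff.mp (hA (toLp 2 ((x : H), T x)) (T.mem_graph x))
    have hy : (y : H) = A x := hy₁
    exact ⟨hy ▸ y.2, (congrArg T (Subtype.ext hy.symm)).trans hy₂⟩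

end Graph

section Adjoint

variable {H : Type*} [NormedAddCommGroup H] [InnerProductSpace ℂ H] [CompleteSpace H]

theorem adjoint_diagonalL2 (A : H →L[ℂ] H) : adjoint (diagonalL2 A) = diagonalL2 (adjoint A) := by
  refine ((eq_adjoint_iff _ _).mpr fun x y => ?_).symm
  simp only [prod_inner_apply, ofLp_diagonalL2, adjoint_inner_left]

theorem mem_orthogonal_graphL2_iff {T : H →ₗ.[ℂ] H} (hT : Dense (T.domain : Set H))
    {u : WithLp 2 (H × H)} : u ∈ (graphL2 T)ᗮ ↔ ((ofLp u).2, -(ofLp u).1) ∈ T†.graph := by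
  rw [T.adjoint_graph_eq_graph_adjoint hT, Submodule.mem_adjoint_iff, Submodule.mem_orthogonal]
  constructor
  · intro h a b hab
    have := h (toLp 2 (a, b)) hab
    simp only [prod_inner_apply, inner_neg_right] at this ⊢
    linear_combination this
  · intro h v hv
    have := h _ _ hv
    simp only [prod_inner_apply, inner_neg_right] at this ⊢
    linear_combination this

theorem mem_pmapCommutant_adjoint_iff_mem_invtSubmodule {T : H →ₗ.[ℂ] H}
    (hT : Dense (T.domain : Set H)) {A : H →L[ℂ] H} :
    A ∈ pmapCommutant T† ↔ (graphL2 T)ᗮ ∈ invtSubmodule (diagonalL2 A : _ →ₗ[ℂ] _) := by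
  simp only [mem_pmapCommutant_iff_mem_invtSubmodule, mem_invtSubmodule_iff_forall_mem_of_mem,
    mem_orthogonal_graphL2_iff hT, mem_graphL2_iff]
  constructor
  · intro hA u hu
    simpa using hA (toLp 2 _) hu
  · intro hA w hw
    simpa using hA (toLp 2 (-(ofLp w).2, (ofLp w).1)) (by simpa using hw)

theorem mem_pmapCommutant_adjoint_iff {T : H →ₗ.[ℂ] H} (hdense : Dense (T.domain : Set H))
    (hclosed : T.IsClosed) {A : H →L[ℂ] H} :
    A ∈ pmapCommutant T† ↔ adjoint A ∈ pmapCommutant T := by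
  have : CompleteSpace (graphL2 T) := (isClosed_graphL2 hclosed).completeSpace_coe
  rw [mem_pmapCommutant_adjoint_iff_mem_invtSubmodule hdense,
    mem_pmapCommutant_iff_mem_invtSubmodule, ← adjoint_diagonalL2,
    ContinuousLinearMap.mem_invtSubmodule_adjoint_iff]

end Adjoint

theorem gInvariant_iff_forall_mem_pmapCommutant {H : Type*} [NormedAddCommGroup H]
    [InnerProductSpace ℂ H] {G : Type*} [Group G] (V : G →* (H ≃ₗᵢ[ℂ] H)) (T : H →ₗ.[ℂ] H) :
    GInvariant V T ↔ ∀ g, (V g).toLinearIsometry.toContinuousLinearMap ∈ pmapCommutant T :=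
  Iff.rfl

theorem gInvariant_iff_affiliated_general {H : Type*} [NormedAddCommGroup H]
    [InnerProductSpace ℂ H] [CompleteSpace H] {G : Type*} [Group G]
    (V : G →* (H ≃ₗᵢ[ℂ] H)) (T : H →ₗ.[ℂ] H)
    (hdense : Dense (T.domain : Set H)) (hclosed : T.IsClosed) :
    GInvariant V T ↔
      Wstar T ⊆ boundedCommutant
        {A : H →L[ℂ] H | ∃ g : G, A = (V g).toLinearIsometry.toContinuousLinearMap} := by
  have : CompleteSpace (graphL2 T) := (isClosed_graphL2 hclosed).completeSpace_coe
  rw [gInvariant_iff_forall_mem_pmapCommutant]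
  constructor
  · rintro hV A hA _ ⟨g, rfl⟩
    refine hA _ ⟨hV g, (mem_pmapCommutant_adjoint_iff hdense hclosed).mpr ?_⟩
    have hadj : adjoint (V g : H →L[ℂ] H) = V g⁻¹ := by
      rw [(V g).adjoint_eq_symm, map_inv, LinearIsometryEquiv.inv_def]
    exact hadj ▸ hV g⁻¹
  · intro hsub g
    have hP (A : H →L[ℂ] H) (hA : A ∈ pmapCommutant T ∩ pmapCommutant T†) :
        Commute (graphL2 T).starProjection (diagonalL2 A) := by
      rw [Submodule.commute_starProjection_iff, ← mem_pmapCommutant_iff_mem_invtSubmodule]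
      refine ⟨hA.1, orthogonal_mem_invtSubmodule ?_⟩
      rw [adjoint_diagonalL2, ← mem_pmapCommutant_iff_mem_invtSubmodule,
        ← mem_pmapCommutant_adjoint_iff hdense hclosed]
      exact hA.2
    have hPV := commute_diagonalL2_of_mem_boundedCommutant_boundedCommutant hP
      fun C hC => (hsub hC _ ⟨g, rfl⟩).symm
    exact mem_pmapCommutant_iff_mem_invtSubmodule.mpr (Submodule.commute_starProjection_iff.mp hPV).1

/-- A closed, symmetric, densely defined operator `T` is `G`-invariant if and only if it
is affiliated to the commutant `𝒱' = {V(g) : g ∈ G}'`, i.e. `W*(T) ⊆ 𝒱'`. -/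
theorem gInvariant_iff_affiliated {H : Type*} [NormedAddCommGroup H]
    [InnerProductSpace ℂ H] [CompleteSpace H] {G : Type*} [Group G]
    (V : G →* (H ≃ₗᵢ[ℂ] H)) (T : H →ₗ.[ℂ] H)
    (hdense : Dense (T.domain : Set H)) (hclosed : T.IsClosed)
    (hsymm : ∀ x y : T.domain, ⟪T x, (y : H)⟫_ℂ = ⟪(x : H), T y⟫_ℂ) :
    GInvariant V T ↔
      Wstar T ⊆ boundedCommutant
        {A : H →L[ℂ] H | ∃ g : G, A = (V g).toLinearIsometry.toContinuousLinearMap} :=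
  gInvariant_iff_affiliated_general V T hdense hclosed
end

section
/- Let T be a self-adjoint operator on H that is G-invariant with respect to a unitary, irreducible representation V of G on H. Then T is bounded and T = i((λ-1)/(λ+1))·I for some λ on the unit circle with λ ≠ -1. -/
/-!
On the closed graph of a self-adjoint `T`, the map `(x, T x) ↦ T x + i x` satisfies
`‖T x + i x‖² = ‖x‖² + ‖T x‖²`, so it is injective with closed range, and its range is dense
because `i` is not an eigenvalue of `T`. Hence the resolvent `R = (T + i)⁻¹` is a bounded operator
on `H`, and `G`-invariance of `T` makes it commute with `V`.

Schur's lemma then gives `R = μ • 1`: for a self-adjoint `A` commuting with `V` and any real `m`,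
the positive and negative parts of `A - m` commute with `V` and multiply to zero, so one of them
vanishes; thus the spectrum of `A` is a single point. Applied to the real and imaginary parts of
`R`, this makes `R` scalar. Since `R` is injective, `μ ≠ 0`, so `D(T) = H` and `T = c` with
`c = μ⁻¹ - i`, which is real because `T` is symmetric; `λ` is the Cayley transform
`(1 - i c) / (1 + i c)`.
-/

open scoped InnerProductSpace
open LinearPMap

/-- Irreducibility of a unitary representation: the only closed invariant subspaces are
`⊥` and `⊤`. -/
def IsIrreducibleRep {H : Type*} [NormedAddCommGroup H] [InnerProductSpace ℂ H]
    {G : Type*} [Group G] (V : G →* (H ≃ₗᵢ[ℂ] H)) : Prop :=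
  ∀ K : Submodule ℂ H, IsClosed (K : Set H) →
    (∀ g : G, K.map (V g).toLinearEquiv.toLinearMap ≤ K) → K = ⊥ ∨ K = ⊤

open ComplexStarModule

namespace IsIrreducibleRep

variable {H : Type*} [NormedAddCommGroup H] [InnerProductSpace ℂ H]
  {G : Type*} [Group G] {V : G →* (H ≃ₗᵢ[ℂ] H)}

theorem injective_of_commute (hirr : IsIrreducibleRep V) {A : H →L[ℂ] H}
    (hA : ∀ g, Commute A (V g : H →L[ℂ] H)) (hA₀ : A ≠ 0) : Function.Injective A := by
  have hker : ∀ g, (LinearMap.ker (A : H →ₗ[ℂ] H)).map (V g).toLinearEquiv.toLinearMap ≤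
      LinearMap.ker (A : H →ₗ[ℂ] H) := by
    rintro g _ ⟨x, hx : A x = 0, rfl⟩
    show A (V g x) = 0
    calc A (V g x) = V g (A x) := congr($(hA g) x)
      _ = 0 := by rw [hx, _root_.map_zero]
  rcases hirr _ A.isClosed_ker hker with h | h
  · exact LinearMap.ker_eq_bot.mp h
  · refine absurd (ContinuousLinearMap.ext fun x => ?_) hA₀
    exact LinearMap.mem_ker.mp (h ▸ Submodule.mem_top)

theorem posPart_eq_zero_or_negPart_eq_zero [CompleteSpace H] (hirr : IsIrreducibleRep V)
    {A : H →L[ℂ] H} (hA : ∀ g, Commute A (V g : H →L[ℂ] H)) : A⁺ = 0 ∨ A⁻ = 0 := by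
  refine or_iff_not_imp_left.mpr fun hpos => ?_
  ext x
  refine hirr.injective_of_commute (A := A⁺) (fun g => (hA g).cfcₙ_real _) hpos ?_
  rw [_root_.zero_apply, _root_.map_zero]
  exact congr($(CFC.posPart_mul_negPart A) x)

theorem eq_algebraMap_of_isSelfAdjoint [CompleteSpace H] (hirr : IsIrreducibleRep V) {A : H →L[ℂ] H}
    (hA : IsSelfAdjoint A) (hAV : ∀ g, Commute A (V g : H →L[ℂ] H)) :
    ∃ r : ℝ, A = algebraMap ℝ (H →L[ℂ] H) r := by
  rcases subsingleton_or_nontrivial H with hH | hH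
  · exact ⟨0, Subsingleton.elim _ _⟩
  have hle : ∀ m : ℝ, A ≤ algebraMap ℝ _ m ∨ algebraMap ℝ _ m ≤ A := fun m => by
    have hm : IsSelfAdjoint (A - algebraMap ℝ _ m) := hA.sub (.algebraMap _ (.all m))
    refine (hirr.posPart_eq_zero_or_negPart_eq_zero fun g =>
      (hAV g).sub_left (Algebra.commutes m _)).imp (fun h => ?_) (fun h => ?_)
    · exact sub_nonpos.mp ((CFC.posPart_eq_zero_iff _ hm).mp h)
    · exact sub_nonneg.mp ((CFC.negPart_eq_zero_iff _ hm).mp h)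
  have hspec : ∀ x ∈ spectrum ℝ A, ∀ y ∈ spectrum ℝ A, y ≤ x := fun x hx y hy => by
    rcases hle ((x + y) / 2) with h | h
    · linarith [(le_algebraMap_iff_spectrum_le hA).mp h y hy]
    · linarith [(algebraMap_le_iff_le_spectrum hA).mp h x hx]
  obtain ⟨r, hr⟩ := ContinuousFunctionalCalculus.spectrum_nonempty (R := ℝ) A hA
  exact ⟨r, CFC.eq_algebraMap_of_spectrum_subset_singleton A r fun b hb =>
    le_antisymm (hspec r hr b hb) (hspec b hb r hr)⟩

theorem commute_star [CompleteSpace H] {A : H →L[ℂ] H} (hA : ∀ g, Commute A (V g : H →L[ℂ] H))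
    (g : G) :
    Commute (star A) (V g : H →L[ℂ] H) := by
  have h := (hA g⁻¹).star_star
  rwa [ContinuousLinearMap.star_eq_adjoint (V g⁻¹ : H →L[ℂ] H),
    LinearIsometryEquiv.adjoint_eq_symm, map_inv] at h

theorem exists_eq_smul_one [CompleteSpace H] (hirr : IsIrreducibleRep V) {A : H →L[ℂ] H}
    (hA : ∀ g, Commute A (V g : H →L[ℂ] H)) : ∃ μ : ℂ, A = μ • 1 := by
  obtain ⟨r₁, hr₁⟩ := hirr.eq_algebraMap_of_isSelfAdjoint (ℜ A).2 fun g => by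
    rw [realPart_apply_coe]
    exact ((hA g).add_left (commute_star hA g)).smul_left (2 : ℝ)⁻¹
  obtain ⟨r₂, hr₂⟩ := hirr.eq_algebraMap_of_isSelfAdjoint (ℑ A).2 fun g => by
    rw [imaginaryPart_apply_coe]
    exact (((hA g).sub_left (commute_star hA g)).smul_left (2 : ℝ)⁻¹).smul_left (-Complex.I)
  refine ⟨r₁ + Complex.I * r₂, ?_⟩
  rw [← realPart_add_I_smul_imaginaryPart A, hr₁, hr₂]
  simp [Algebra.algebraMap_eq_smul_one, add_smul, mul_smul]

end IsIrreducibleRep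

open scoped ComplexConjugate

namespace LinearPMap

section RCLike

variable {𝕜 E : Type*} [RCLike 𝕜] [NormedAddCommGroup E] [InnerProductSpace 𝕜 E] [CompleteSpace E]
  {T : E →ₗ.[𝕜] E}

theorem mem_graph_iff_of_isSelfAdjoint (hT : IsSelfAdjoint T) {p : E × E} :
    p ∈ T.graph ↔ ∀ q ∈ T.graph, ⟪q.2, p.1⟫_𝕜 = ⟪q.1, p.2⟫_𝕜 := by
  conv_lhs => rw [← isSelfAdjoint_def.mp hT]
  rw [adjoint_graph_eq_graph_adjoint hT.dense_domain, Submodule.mem_adjoint_iff]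
  simp only [sub_eq_zero, Prod.forall]

theorem inner_snd_fst_eq_of_isSelfAdjoint (hT : IsSelfAdjoint T) {p q : E × E}
    (hp : p ∈ T.graph) (hq : q ∈ T.graph) : ⟪q.2, p.1⟫_𝕜 = ⟪q.1, p.2⟫_𝕜 :=
  (mem_graph_iff_of_isSelfAdjoint hT).mp hp q hq

theorem conj_eq_of_apply_eq_smul (hT : IsSelfAdjoint T) {c : 𝕜} {x : T.domain} (hx : (x : E) ≠ 0)
    (h : T x = c • (x : E)) : conj c = c := by
  have hgraph : ((x : E), c • (x : E)) ∈ T.graph := h ▸ T.mem_graph x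
  have := inner_snd_fst_eq_of_isSelfAdjoint hT hgraph hgraph
  rw [inner_smul_left, inner_smul_right] at this
  exact mul_right_cancel₀ (inner_self_ne_zero.mpr hx) this

end RCLike

variable {E : Type*} [NormedAddCommGroup E] [InnerProductSpace ℂ E] {T : E →ₗ.[ℂ] E}

/-- `T + i` as a bounded map on the graph of `T`, which is closed, hence complete, when `T` is
self-adjoint. -/
noncomputable def graphAddI (T : E →ₗ.[ℂ] E) : T.graph →L[ℂ] E :=
  (ContinuousLinearMap.snd ℂ E E + Complex.I • ContinuousLinearMap.fst ℂ E E).comp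
    T.graph.subtypeL

@[simp]
theorem graphAddI_apply (p : T.graph) :
    T.graphAddI p = (p : E × E).2 + Complex.I • (p : E × E).1 :=
  rfl

variable [CompleteSpace E]

theorem norm_graphAddI_sq (hT : IsSelfAdjoint T) (p : T.graph) :
    ‖T.graphAddI p‖ ^ 2 = ‖(p : E × E).1‖ ^ 2 + ‖(p : E × E).2‖ ^ 2 := by
  have hreal : (⟪(p : E × E).2, (p : E × E).1⟫_ℂ).im = 0 := by
    refine Complex.conj_eq_iff_im.mp ((inner_conj_symm (𝕜 := ℂ) _ _).trans ?_)
    exact (inner_snd_fst_eq_of_isSelfAdjoint hT p.2 p.2).symm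
  rw [graphAddI_apply, norm_add_sq (𝕜 := ℂ), inner_smul_right, norm_smul]
  simp only [RCLike.mul_re, RCLike.re_to_complex, Complex.I_re, zero_mul, RCLike.im_to_complex,
    Complex.I_im, hreal, mul_zero, sub_self, add_zero, Complex.norm_I, one_mul]
  ring

theorem norm_le_norm_graphAddI (hT : IsSelfAdjoint T) (p : T.graph) : ‖p‖ ≤ ‖T.graphAddI p‖ := by
  have h := norm_graphAddI_sq hT p
  rw [Submodule.coe_norm, Prod.norm_def]
  refine max_le ?_ ?_ <;> refine le_of_pow_le_pow_left₀ two_ne_zero (norm_nonneg _) ?_ <;>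
    nlinarith [sq_nonneg ‖(p : E × E).1‖, sq_nonneg ‖(p : E × E).2‖]

theorem antilipschitzWith_graphAddI (hT : IsSelfAdjoint T) : AntilipschitzWith 1 T.graphAddI :=
  T.graphAddI.antilipschitz_of_bound fun p => by simpa using norm_le_norm_graphAddI hT p

theorem orthogonal_range_graphAddI (hT : IsSelfAdjoint T) : T.graphAddI.rangeᗮ = ⊥ := by
  rw [Submodule.eq_bot_iff]
  intro z hz
  have hgraph : (z, Complex.I • z) ∈ T.graph := by
    refine (mem_graph_iff_of_isSelfAdjoint hT).mpr fun q hq => ?_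
    have := Submodule.inner_right_of_mem_orthogonal (LinearMap.mem_range_self _ ⟨q, hq⟩) hz
    rw [ContinuousLinearMap.coe_coe, graphAddI_apply, inner_add_left, inner_smul_left,
      Complex.conj_I] at this
    rw [inner_smul_right]
    linear_combination this
  have h := inner_snd_fst_eq_of_isSelfAdjoint hT hgraph hgraph
  rw [inner_smul_left, inner_smul_right, Complex.conj_I] at h
  have h2I : (2 * Complex.I) * ⟪z, z⟫_ℂ = 0 := by linear_combination -h
  exact inner_self_eq_zero.mp ((mul_eq_zero.mp h2I).resolve_left (by simp))

theorem range_graphAddI (hT : IsSelfAdjoint T) : T.graphAddI.range = ⊤ := by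
  have : CompleteSpace T.graph := hT.isClosed.completeSpace_coe
  have hclosed : _root_.IsClosed (T.graphAddI.range : Set E) :=
    (antilipschitzWith_graphAddI hT).isClosed_range T.graphAddI.uniformContinuous
  have := hclosed.completeSpace_coe
  rw [← Submodule.orthogonal_eq_bot_iff, orthogonal_range_graphAddI hT]

theorem exists_resolvent (hT : IsSelfAdjoint T) :
    ∃ R : E →L[ℂ] E, (∀ z, (R z, z - Complex.I • R z) ∈ T.graph) ∧
      ∀ p ∈ T.graph, R (p.2 + Complex.I • p.1) = p.1 := by
  have : CompleteSpace T.graph := hT.isClosed.completeSpace_coe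
  let e := ContinuousLinearEquiv.ofBijective T.graphAddI
    (LinearMap.ker_eq_bot.mpr (antilipschitzWith_graphAddI hT).injective) (range_graphAddI hT)
  refine ⟨(ContinuousLinearMap.fst ℂ E E).comp (T.graph.subtypeL.comp (e.symm : E →L[ℂ] T.graph)),
    fun z => ?_, fun p hp => ?_⟩
  · have h : T.graphAddI (e.symm z) = z := e.apply_symm_apply z
    rw [graphAddI_apply] at h
    convert (e.symm z).2 using 1
    exact Prod.ext rfl (eq_sub_of_add_eq h).symm
  · have h : e.symm (T.graphAddI ⟨p, hp⟩) = ⟨p, hp⟩ := e.symm_apply_apply _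
    simpa using congr(($h : E × E).1)

end LinearPMap

section GInvariant

variable {H : Type*} [NormedAddCommGroup H] [InnerProductSpace ℂ H]
  {G : Type*} [Group G] {V : G →* (H ≃ₗᵢ[ℂ] H)} {T : H →ₗ.[ℂ] H}

theorem GInvariant.map_mem_graph (hinv : GInvariant V T) (g : G) {p : H × H}
    (hp : p ∈ T.graph) : (V g p.1, V g p.2) ∈ T.graph := by
  obtain ⟨a, b⟩ := p
  obtain ⟨x, rfl, rfl⟩ := T.mem_graph_iff.mp hp
  obtain ⟨hgx, hTgx⟩ := hinv g x
  exact T.mem_graph_iff.mpr ⟨⟨V g x, hgx⟩, rfl, hTgx⟩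

theorem IsIrreducibleRep.exists_eq_real_smul_of_isSelfAdjoint [CompleteSpace H]
    (hirr : IsIrreducibleRep V) (hT : IsSelfAdjoint T) (hinv : GInvariant V T) :
    ∃ c : ℝ, T.domain = ⊤ ∧ ∀ x : T.domain, T x = (c : ℂ) • (x : H) := by
  rcases subsingleton_or_nontrivial H with hH | hH
  · exact ⟨0, eq_top_iff.mpr fun x _ => Subsingleton.elim x 0 ▸ T.domain.zero_mem,
      fun x => Subsingleton.elim _ _⟩
  obtain ⟨R, hR_graph, hR_inv⟩ := exists_resolvent hT
  have hRV : ∀ g, Commute R (V g : H →L[ℂ] H) := fun g => by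
    ext z
    have h := hR_inv _ (hinv.map_mem_graph g (hR_graph z))
    simp only [_root_.map_sub, _root_.map_smul, sub_add_cancel] at h
    simpa using h
  obtain ⟨μ, hμ⟩ := hirr.exists_eq_smul_one hRV
  have hR : ∀ z, R z = μ • z := fun z => by simp [hμ]
  have hμ₀ : μ ≠ 0 := by
    rintro rfl
    obtain ⟨z, hz⟩ := exists_ne (0 : H)
    have h := hR_graph z
    simp only [hR, zero_smul, smul_zero, sub_zero] at h
    exact hz (T.graph_fst_eq_zero_snd h rfl)
  have hdom : T.domain = ⊤ := eq_top_iff.mpr fun z _ => by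
    simpa [hR, smul_smul, hμ₀] using T.domain.smul_mem μ⁻¹ (mem_domain_of_mem_graph (hR_graph z))
  set c := μ⁻¹ - Complex.I
  have hc : ∀ x : T.domain, T x = c • (x : H) := fun x => by
    have h := hR_inv _ (T.mem_graph x)
    rw [hR, ← eq_inv_smul_iff₀ hμ₀] at h
    rw [sub_smul, ← h]
    abel
  obtain ⟨x, hx⟩ := exists_ne (0 : H)
  have hreal := conj_eq_of_apply_eq_smul hT (x := ⟨x, hdom ▸ Submodule.mem_top⟩) hx (hc _)
  refine ⟨c.re, hdom, fun x => ?_⟩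
  rw [Complex.conj_eq_iff_re.mp hreal]
  exact hc x

end GInvariant

theorem Complex.exists_inverse_cayley_eq (c : ℝ) :
    ∃ lam : ℂ, ‖lam‖ = 1 ∧ lam ≠ -1 ∧ Complex.I * ((lam - 1) / (lam + 1)) = c := by
  have hw : 1 + Complex.I * c ≠ 0 := fun h => by simpa using congr(Complex.re $h)
  refine ⟨(1 - Complex.I * c) / (1 + Complex.I * c), ?_, ?_, ?_⟩
  · have hconj : 1 - Complex.I * c = conj (1 + Complex.I * c) := by simp [sub_eq_add_neg]
    rw [norm_div, hconj, Complex.norm_conj, div_self (norm_ne_zero_iff.mpr hw)]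
  · rw [Ne, div_eq_iff hw]
    intro h
    have : (2 : ℂ) = 0 := by linear_combination h
    norm_num at this
  · field_simp
    linear_combination (-2 * (c : ℂ)) * Complex.I_sq

theorem selfAdjoint_GInvariant_irreducible_is_scalar_general {H : Type*} [NormedAddCommGroup H]
    [InnerProductSpace ℂ H] [CompleteSpace H] {G : Type*} [Group G]
    (V : G →* (H ≃ₗᵢ[ℂ] H)) (hirr : IsIrreducibleRep V)
    (T : H →ₗ.[ℂ] H)
    (hsa : T.adjoint = T)
    (hinv : GInvariant V T) :
    ∃ lam : ℂ, ‖lam‖ = 1 ∧ lam ≠ -1 ∧ T.domain = ⊤ ∧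
      ∀ x : T.domain, T x = (Complex.I * ((lam - 1) / (lam + 1))) • (x : H) := by
  obtain ⟨c, hdom, hc⟩ := hirr.exists_eq_real_smul_of_isSelfAdjoint hsa hinv
  obtain ⟨lam, hnorm, hne, hlam⟩ := Complex.exists_inverse_cayley_eq c
  exact ⟨lam, hnorm, hne, hdom, fun x => hlam ▸ hc x⟩

/-- A self-adjoint operator that is `G`-invariant with respect to an irreducible unitary
representation is bounded and equals `i (λ-1)/(λ+1) · I` for some unimodular `λ ≠ -1`. -/
theorem selfAdjoint_GInvariant_irreducible_is_scalar {H : Type*} [NormedAddCommGroup H]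
    [InnerProductSpace ℂ H] [CompleteSpace H] {G : Type*} [Group G]
    (V : G →* (H ≃ₗᵢ[ℂ] H)) (hirr : IsIrreducibleRep V)
    (T : H →ₗ.[ℂ] H) (hdense : Dense (T.domain : Set H))
    (hsa : T.adjoint = T)
    (hinv : GInvariant V T) :
    ∃ lam : ℂ, ‖lam‖ = 1 ∧ lam ≠ -1 ∧ T.domain = ⊤ ∧
      ∀ x : T.domain, T x = (Complex.I * ((lam - 1) / (lam + 1))) • (x : H) :=
  selfAdjoint_GInvariant_irreducible_is_scalar_general V hirr T hsa hinv
end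

section
/- Let U be a unitary on L²(∂Ω) with spectral gap at -1 whose restriction U₊ to H^{1/2}(∂Ω) is well-defined, continuous in the 1/2-Sobolev norm, and has pure point spectrum σ(U₊) = σ_p(U₊). Then the partial Cayley transform A_U = i P_{W⊥}(U - I)(U + I)⁻¹ and the orthogonal projection P_W onto the eigenspace W = ker(U + I) both leave H^{1/2}(∂Ω) invariant and are continuous with respect to the Sobolev 1/2-norm; in particular U is admissible. -/
/-!
Since `-1` is isolated in `σ(U)` and `U` is normal, the continuous functional calculus gives
the orthogonal projection `P_W = 1_{-1}(U)` and the partial inverse `B = (z + 1)⁻¹ 1_{z ≠ -1}(U)`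
of `U + 1`, with `A_U = i (1 - P_W)(U - 1) B`. Comparing the resolvent of `U` with that of the
normal operator obtained by moving the eigenvalue `-1` to `-1 + ε`, Cauchy's formula identifies
`P_W` and `B` with the contour integrals `(2πi)⁻¹ ∮ (z - U)⁻¹ dz` and
`-(2πi)⁻¹ ∮ (z + 1)⁻¹ (z - U)⁻¹ dz` over a small circle around `-1`. As `U₊` has pure point
spectrum and `H^{1/2}` embeds injectively, `σ(U₊) ⊆ σ(U)`, so the circle also avoids `σ(U₊)`;
the resolvents of `U₊` and `U` intertwine with the embedding, hence so do the contour integrals,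
and `A_U`, `P_W` restrict to bounded operators on `H^{1/2}`.
-/

open Complex Metric Real Filter Topology

theorem ContinuousLinearMap.circleIntegral_comp_comm {F G : Type*} [NormedAddCommGroup F]
    [NormedSpace ℂ F] [CompleteSpace F] [NormedAddCommGroup G] [NormedSpace ℂ G]
    [CompleteSpace G] (L : F →L[ℂ] G) {f : ℂ → F} {c : ℂ} {R : ℝ}
    (hf : CircleIntegrable f c R) :
    ∮ z in C(c, R), L (f z) = L (∮ z in C(c, R), f z) := by
  rw [circleIntegral, circleIntegral, ← L.intervalIntegral_comp_comm hf.out]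
  simp only [map_smul]

theorem continuousOn_resolvent {A : Type*} [NormedRing A] [NormedAlgebra ℂ A] [CompleteSpace A]
    (a : A) : ContinuousOn (resolvent a) (resolventSet ℂ a) := fun _ hz =>
  (spectrum.hasDerivAt_resolvent_const_left hz).continuousAt.continuousWithinAt

theorem exists_spectral_gap_neg_one {A : Type*} [NormedRing A] [NormedAlgebra ℂ A]
    [CompleteSpace A] {a : A}
    (h : IsUnit (1 + a) ∨ ∃ ε > (0 : ℝ), ∀ μ ∈ spectrum ℂ a, μ ≠ -1 → ε ≤ ‖μ + 1‖) :
    ∃ ε > (0 : ℝ), ∀ μ ∈ spectrum ℂ a, μ = -1 ∨ ε ≤ ‖μ + 1‖ := by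
  rcases h with h | ⟨ε, hε, h⟩
  · have hres : (-1 : ℂ) ∈ resolventSet ℂ a := by
      rw [spectrum.mem_resolventSet_iff, map_neg, map_one, ← neg_add']
      exact h.neg
    obtain ⟨ε, hε, hball⟩ := Metric.isOpen_iff.mp (spectrum.isOpen_resolventSet a) _ hres
    refine ⟨ε, hε, fun μ hμ => Or.inr ?_⟩
    rw [← sub_neg_eq_add, ← dist_eq_norm]
    exact not_lt.mp fun hlt => hμ (hball hlt)
  · exact ⟨ε, hε, fun μ hμ => or_iff_not_imp_left.mpr (h μ hμ)⟩

theorem partialCayley_eq_smul_mul {F : Type*} [NormedAddCommGroup F] [NormedSpace ℂ F]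
    {U P A B : F →L[ℂ] F} (hA : ∀ x, A ((U + 1) x) = I • ((1 - P) ((U - 1) x)))
    (hAker : ∀ x ∈ LinearMap.ker ((U + 1 : F →L[ℂ] F) : F →ₗ[ℂ] F), A x = 0)
    (hB : (U + 1) * B = 1 - P) (hP : (U + 1) * P = 0) :
    A = I • ((1 - P) * (U - 1) * B) := by
  ext v
  have hPv : P v ∈ LinearMap.ker ((U + 1 : F →L[ℂ] F) : F →ₗ[ℂ] F) := by
    rw [LinearMap.mem_ker, ContinuousLinearMap.coe_coe, ← mul_apply_eq_comp, hP,
      zero_apply]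
  have hv : (U + 1) (B v) + P v = v := by
    rw [← mul_apply_eq_comp, hB, sub_apply, one_apply_eq_self, sub_add_cancel]
  rw [← hv, map_add, hA, hAker _ hPv, add_zero, hv]
  rfl

namespace ContinuousLinearMap

variable {F G : Type*} [NormedAddCommGroup F] [NormedSpace ℂ F] [NormedAddCommGroup G]
  [NormedSpace ℂ G] (j : F →L[ℂ] G)

def restrictable : Subalgebra ℂ (G →L[ℂ] G) where
  carrier := {S | ∃ T : F →L[ℂ] F, ∀ x, j (T x) = S (j x)}
  mul_mem' := by
    rintro S S' ⟨T, hT⟩ ⟨T', hT'⟩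
    exact ⟨T * T', fun x => by simp only [mul_apply_eq_comp, hT, hT']⟩
  add_mem' := by
    rintro S S' ⟨T, hT⟩ ⟨T', hT'⟩
    exact ⟨T + T', fun x => by simp only [add_apply, map_add, hT, hT']⟩
  algebraMap_mem' c := ⟨algebraMap ℂ _ c, fun x => by simp [Algebra.algebraMap_eq_smul_one]⟩

variable {j}

theorem mem_restrictable {S : G →L[ℂ] G} :
    S ∈ j.restrictable ↔ ∃ T : F →L[ℂ] F, ∀ x, j (T x) = S (j x) :=
  Iff.rfl

theorem circleIntegral_mem_restrictable [CompleteSpace F] [CompleteSpace G] {c : ℂ} {R : ℝ}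
    (hR : 0 ≤ R) {Φ : ℂ → G →L[ℂ] G} {Ψ : ℂ → F →L[ℂ] F} (hΦ : ContinuousOn Φ (sphere c R))
    (hΨ : ContinuousOn Ψ (sphere c R)) (h : ∀ z ∈ sphere c R, ∀ x, j (Ψ z x) = Φ z (j x)) :
    (∮ z in C(c, R), Φ z) ∈ j.restrictable := by
  refine ⟨∮ z in C(c, R), Ψ z, fun x => ?_⟩
  let evalMap : (F →L[ℂ] F) →L[ℂ] G := apply ℂ G x ∘L compL ℂ F F G j
  calc j ((∮ z in C(c, R), Ψ z) x) = evalMap (∮ z in C(c, R), Ψ z) := rfl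
    _ = ∮ z in C(c, R), evalMap (Ψ z) := (evalMap.circleIntegral_comp_comm
        (hΨ.circleIntegrable hR)).symm
    _ = ∮ z in C(c, R), apply ℂ G (j x) (Φ z) :=
        circleIntegral.integral_congr hR fun z hz => h z hz x
    _ = (∮ z in C(c, R), Φ z) (j x) :=
        (apply ℂ G (j x)).circleIntegral_comp_comm (hΦ.circleIntegrable hR)

variable {T : F →L[ℂ] F} {S : G →L[ℂ] G} (hjT : ∀ x, j (T x) = S (j x))
include hjT

theorem map_resolvent_apply {z : ℂ} (hT : z ∈ resolventSet ℂ T) (hS : z ∈ resolventSet ℂ S)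
    (x : F) : j (resolvent T z x) = resolvent S z (j x) := by
  have hsub : ∀ y, (algebraMap ℂ _ z - S) (j y) = j ((algebraMap ℂ _ z - T) y) := fun y => by
    simp [Algebra.algebraMap_eq_smul_one, hjT]
  have hSinv : resolvent S z * (algebraMap ℂ _ z - S) = 1 := Ring.inverse_mul_cancel _ hS
  have hTinv : (algebraMap ℂ _ z - T) * resolvent T z = 1 := Ring.mul_inverse_cancel _ hT
  calc j (resolvent T z x) = resolvent S z ((algebraMap ℂ _ z - S) (j (resolvent T z x))) := by
        rw [← mul_apply_eq_comp, hSinv, one_apply_eq_self]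
    _ = resolvent S z (j x) := by
        rw [hsub, ← mul_apply_eq_comp _ (resolvent T z), hTinv, one_apply_eq_self]

theorem mem_spectrum_of_apply_eq_smul (hj : Function.Injective j) {μ : ℂ} {x : F} (hx : x ≠ 0)
    (hTx : T x = μ • x) : μ ∈ spectrum ℂ S := by
  rw [spectrum.mem_iff]
  intro hu
  have hjx : (algebraMap ℂ _ μ - S) (j x) = 0 := by
    simp [Algebra.algebraMap_eq_smul_one, ← hjT, hTx]
  refine hx (hj ?_)
  calc j x = Ring.inverse (algebraMap ℂ _ μ - S) ((algebraMap ℂ _ μ - S) (j x)) := by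
        rw [← mul_apply_eq_comp, Ring.inverse_mul_cancel _ hu, one_apply_eq_self]
    _ = j 0 := by rw [hjx, map_zero, map_zero]

theorem circleIntegral_smul_resolvent_mem_restrictable [CompleteSpace F] [CompleteSpace G]
    {c : ℂ} {R : ℝ} (hR : 0 ≤ R) (hT : sphere c R ⊆ resolventSet ℂ T)
    (hS : sphere c R ⊆ resolventSet ℂ S) {g : ℂ → ℂ} (hg : ContinuousOn g (sphere c R)) :
    (∮ z in C(c, R), g z • resolvent S z) ∈ j.restrictable :=
  circleIntegral_mem_restrictable hR (hg.fun_smul ((continuousOn_resolvent S).mono hS))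
    (hg.fun_smul ((continuousOn_resolvent T).mono hT)) fun z hz x => by
      rw [smul_apply, smul_apply, map_smul, map_resolvent_apply hjT (hT hz) (hS hz)]

end ContinuousLinearMap

section Gap

variable {s : Set ℂ} {ε : ℝ}

theorem continuousOn_ite_of_gap {Y : Type*} [TopologicalSpace Y]
    (hε : 0 < ε) (hs : ∀ z ∈ s, z = -1 ∨ ε ≤ ‖z + 1‖) (y : Y) {h : ℂ → Y}
    (hh : ∀ z ∈ s, z ≠ -1 → ContinuousAt h z) :
    ContinuousOn (fun z => if z = -1 then y else h z) s := by
  intro z hz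
  by_cases hz1 : z = -1
  · subst hz1
    have hiso : ∀ᶠ w in 𝓝[s] (-1 : ℂ), w = -1 := by
      filter_upwards [inter_mem_nhdsWithin s (ball_mem_nhds (-1 : ℂ) hε)] with w ⟨hws, hwb⟩
      rw [mem_ball, dist_eq_norm, sub_neg_eq_add] at hwb
      exact (hs w hws).resolve_right (not_le.mpr hwb)
    refine (continuousWithinAt_const (b := y)).congr_of_eventuallyEq ?_ (if_pos rfl)
    filter_upwards [hiso] with w hw using if_pos hw
  · have hne : ∀ᶠ w in 𝓝 z, w ≠ -1 := isOpen_ne.mem_nhds hz1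
    refine ((hh z hz hz1).congr ?_).continuousWithinAt
    filter_upwards [hne] with w hw using (if_neg hw).symm

theorem ite_neg_one_shift_ne (hs : ∀ z ∈ s, z = -1 ∨ ε ≤ ‖z + 1‖) {z w : ℂ} (hz : z ∈ s)
    (hw : w ∈ ball (-1 : ℂ) ε) : (if z = -1 then -1 + (ε : ℂ) else z) ≠ w := by
  rw [mem_ball, dist_eq_norm, sub_neg_eq_add] at hw
  split_ifs with h
  · rintro rfl
    simp only [neg_add_cancel_comm, norm_real, Real.norm_eq_abs] at hw
    exact not_lt.mpr (le_abs_self ε) hw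
  · rintro rfl
    exact (hs _ hz).elim h (not_le.mpr hw)

theorem continuousOn_ite_neg_one_shift (hε : 0 < ε) (hs : ∀ z ∈ s, z = -1 ∨ ε ≤ ‖z + 1‖) :
    ContinuousOn (fun z : ℂ => if z = -1 then -1 + (ε : ℂ) else z) s :=
  continuousOn_ite_of_gap hε hs _ fun _ _ _ => continuousAt_id

variable {A : Type*} [Ring A] [Algebra ℂ A] {a : A}

theorem mem_resolventSet_of_gap (hgap : ∀ z ∈ spectrum ℂ a, z = -1 ∨ ε ≤ ‖z + 1‖) {w : ℂ}
    (hw : w ∈ ball (-1 : ℂ) ε) (hw1 : w ≠ -1) : w ∈ resolventSet ℂ a := by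
  refine spectrum.mem_resolventSet_iff.mpr (spectrum.notMem_iff.mp fun hws => ?_)
  rw [mem_ball, dist_eq_norm, sub_neg_eq_add] at hw
  exact (hgap w hws).elim hw1 (not_le.mpr hw)

theorem sphere_subset_resolventSet_of_gap (hgap : ∀ z ∈ spectrum ℂ a, z = -1 ∨ ε ≤ ‖z + 1‖)
    {r : ℝ} (hr : 0 < r) (hrε : r < ε) : sphere (-1 : ℂ) r ⊆ resolventSet ℂ a := fun _ hz =>
  mem_resolventSet_of_gap hgap (sphere_subset_ball hrε hz) (ne_of_mem_sphere hz hr.ne')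

end Gap

section Riesz

variable {A : Type*} [CStarAlgebra A] (a : A)

noncomputable def negOneSpectralProj : A := cfc (fun z : ℂ => if z = -1 then 1 else 0) a

noncomputable def addOneReducedInv : A := cfc (fun z : ℂ => if z = -1 then 0 else (z + 1)⁻¹) a

/-- Moving the isolated spectral point `-1` to `-1 + ε` makes the resolvent holomorphic on
`ball (-1) ε`, while on the range of `1 - negOneSpectralProj a` it still agrees with the
resolvent of `a`. -/
noncomputable def negOneShift (ε : ℝ) : A := cfc (fun z : ℂ => if z = -1 then -1 + ε else z) a

theorem isSelfAdjoint_negOneSpectralProj : IsSelfAdjoint (negOneSpectralProj a) := by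
  rw [IsSelfAdjoint, negOneSpectralProj, ← cfc_star]
  exact cfc_congr fun z _ => by split_ifs <;> simp

variable [IsStarNormal a]

theorem resolvent_cfc {g : ℂ → ℂ} {w : ℂ} (hg : ContinuousOn g (spectrum ℂ a))
    (hw : ∀ z ∈ spectrum ℂ a, g z ≠ w) :
    resolvent (cfc g a) w = cfc (fun z => (w - g z)⁻¹) a := by
  rw [resolvent, ← cfc_const w a, ← cfc_sub _ _ a continuousOn_const hg,
    cfc_inv _ a (fun z hz => sub_ne_zero.mpr (hw z hz).symm) (continuousOn_const.sub hg)]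

theorem resolvent_eq_cfc {w : ℂ} (hw : w ∉ spectrum ℂ a) :
    resolvent a w = cfc (fun z => (w - z)⁻¹) a := by
  conv_lhs => rw [← cfc_id' ℂ a]
  exact resolvent_cfc a continuousOn_id fun z hz h => hw (h ▸ hz)

theorem add_one_eq_cfc : a + 1 = cfc (fun z : ℂ => z + 1) a := by
  rw [cfc_add_const 1 (fun z : ℂ => z) a, cfc_id' ℂ a, map_one]

variable {a} {ε : ℝ} (hε : 0 < ε) (hgap : ∀ z ∈ spectrum ℂ a, z = -1 ∨ ε ≤ ‖z + 1‖)
include hε hgap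

theorem one_sub_negOneSpectralProj :
    1 - negOneSpectralProj a = cfc (fun z : ℂ => if z = -1 then 0 else 1) a := by
  rw [negOneSpectralProj, ← cfc_const_one ℂ a, ← cfc_sub _ _ a continuousOn_const
    (continuousOn_ite_of_gap hε hgap _ fun _ _ _ => continuousAt_const)]
  exact cfc_congr fun z _ => by split_ifs <;> simp

theorem add_one_mul_negOneSpectralProj : (a + 1) * negOneSpectralProj a = 0 := by
  rw [add_one_eq_cfc, negOneSpectralProj, ← cfc_mul _ _ a (by fun_prop)
    (continuousOn_ite_of_gap hε hgap _ fun _ _ _ => continuousAt_const), ← cfc_zero ℂ a]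
  exact cfc_congr fun z _ => by split_ifs with h <;> simp [h]

theorem add_one_mul_addOneReducedInv :
    (a + 1) * addOneReducedInv a = 1 - negOneSpectralProj a := by
  rw [add_one_eq_cfc, addOneReducedInv, one_sub_negOneSpectralProj hε hgap,
    ← cfc_mul _ _ a (by fun_prop) (continuousOn_ite_of_gap hε hgap (h := fun z => (z + 1)⁻¹) _
      fun z _ hz => ContinuousAt.inv₀ (by fun_prop) (by rwa [Ne, add_eq_zero_iff_eq_neg]))]
  refine cfc_congr fun z _ => ?_
  split_ifs with h
  · simp
  · exact mul_inv_cancel₀ (by rwa [Ne, add_eq_zero_iff_eq_neg])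

theorem addOneReducedInv_mul_add_one :
    addOneReducedInv a * (a + 1) = 1 - negOneSpectralProj a := by
  rw [← add_one_mul_addOneReducedInv hε hgap, add_one_eq_cfc, addOneReducedInv]
  exact cfc_commute_cfc _ _ a |>.eq.symm

theorem ball_subset_resolventSet_negOneShift :
    ball (-1 : ℂ) ε ⊆ resolventSet ℂ (negOneShift a ε) := by
  intro w hw
  refine spectrum.mem_resolventSet_iff.mpr (spectrum.notMem_iff.mp ?_)
  rw [negOneShift, cfc_map_spectrum _ a (hf := continuousOn_ite_neg_one_shift hε hgap)]
  rintro ⟨z, hz, hzw⟩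
  exact ite_neg_one_shift_ne hgap hz hw hzw

theorem resolvent_eq_smul_add_resolvent_negOneShift {w : ℂ} (hw : w ∈ ball (-1 : ℂ) ε)
    (hw1 : w ≠ -1) :
    resolvent a w = (w + 1)⁻¹ • negOneSpectralProj a +
      resolvent (negOneShift a ε) w * (1 - negOneSpectralProj a) := by
  have hwa : w ∉ spectrum ℂ a := spectrum.notMem_iff.mpr
    (spectrum.mem_resolventSet_iff.mp (mem_resolventSet_of_gap hgap hw hw1))
  have hne : ∀ z ∈ spectrum ℂ a, (if z = -1 then -1 + (ε : ℂ) else z) ≠ w :=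
    fun z hz => ite_neg_one_shift_ne hgap hz hw
  have hP := continuousOn_ite_of_gap hε hgap (1 : ℂ) fun _ _ _ =>
    continuousAt_const (y := (0 : ℂ))
  have hP' := continuousOn_ite_of_gap hε hgap (0 : ℂ) fun _ _ _ =>
    continuousAt_const (y := (1 : ℂ))
  have hR : ContinuousOn (fun z => (w - if z = -1 then -1 + (ε : ℂ) else z)⁻¹) (spectrum ℂ a) :=
    (continuousOn_const.sub (continuousOn_ite_neg_one_shift hε hgap)).inv₀
      fun z hz => sub_ne_zero.mpr (hne z hz).symm
  have hPs : ContinuousOn (fun z => (w + 1)⁻¹ • if z = -1 then (1 : ℂ) else 0) (spectrum ℂ a) :=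
    continuousOn_const.fun_smul hP
  rw [resolvent_eq_cfc a hwa, negOneShift,
    resolvent_cfc a (continuousOn_ite_neg_one_shift hε hgap) hne,
    one_sub_negOneSpectralProj hε hgap, negOneSpectralProj, ← cfc_smul _ _ a hP,
    ← cfc_mul _ _ a hR hP', ← cfc_add a _ _ hPs (hR.fun_mul hP')]
  refine cfc_congr fun z _ => ?_
  split_ifs with h
  · simp [h, sub_neg_eq_add]
  · simp

theorem resolvent_negOneShift_neg_one_mul :
    resolvent (negOneShift a ε) (-1 : ℂ) * (1 - negOneSpectralProj a) = -addOneReducedInv a := by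
  have hR : ContinuousOn (fun z => (-1 - if z = -1 then -1 + (ε : ℂ) else z)⁻¹) (spectrum ℂ a) :=
    (continuousOn_const.sub (continuousOn_ite_neg_one_shift hε hgap)).inv₀
      fun z hz => sub_ne_zero.mpr (ite_neg_one_shift_ne hgap hz (mem_ball_self hε)).symm
  rw [negOneShift, resolvent_cfc (w := -1) a (continuousOn_ite_neg_one_shift hε hgap)
      fun z hz => ite_neg_one_shift_ne hgap hz (mem_ball_self hε),
    one_sub_negOneSpectralProj hε hgap, ← cfc_mul _ _ a hR
      (continuousOn_ite_of_gap hε hgap (0 : ℂ) fun _ _ _ => continuousAt_const (y := (1 : ℂ))),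
    addOneReducedInv, ← cfc_neg]
  refine cfc_congr fun z _ => ?_
  split_ifs
  · simp
  · rw [mul_one, ← inv_neg, neg_add]
    ring_nf

theorem differentiableOn_resolvent_negOneShift_mul (b : A) :
    DifferentiableOn ℂ (fun z => resolvent (negOneShift a ε) z * b) (ball (-1 : ℂ) ε) :=
  fun _ hz => ((spectrum.hasDerivAt_resolvent_const_left
    (ball_subset_resolventSet_negOneShift hε hgap hz)).differentiableAt.mul_const b
    ).differentiableWithinAt

theorem circleIntegral_resolvent {r : ℝ} (hr : 0 < r) (hrε : r < ε) :
    ∮ z in C((-1 : ℂ), r), resolvent a z = (2 * π * I : ℂ) • negOneSpectralProj a := by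
  set P := negOneSpectralProj a
  let G : ℂ → A := fun z => P + (z + 1) • (resolvent (negOneShift a ε) z * (1 - P))
  have hG : DifferentiableOn ℂ G (closedBall (-1) r) :=
    (differentiableOn_const P).add ((differentiableOn_id.add_const 1).smul
      ((differentiableOn_resolvent_negOneShift_mul hε hgap _).mono (closedBall_subset_ball hrε)))
  calc ∮ z in C((-1 : ℂ), r), resolvent a z = ∮ z in C((-1 : ℂ), r), (z - -1)⁻¹ • G z := by
        refine circleIntegral.integral_congr hr.le fun z hz => ?_
        have hz1 : z + 1 ≠ 0 := by
          rw [Ne, add_eq_zero_iff_eq_neg]; exact ne_of_mem_sphere hz hr.ne'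
        rw [resolvent_eq_smul_add_resolvent_negOneShift hε hgap (sphere_subset_ball hrε hz)
          (ne_of_mem_sphere hz hr.ne'), sub_neg_eq_add, smul_add, smul_smul, inv_mul_cancel₀ hz1,
          one_smul]
    _ = (2 * π * I : ℂ) • G (-1) := hG.circleIntegral_sub_inv_smul (mem_ball_self hr)
    _ = (2 * π * I : ℂ) • P := by simp [G]

theorem circleIntegral_inv_smul_resolvent {r : ℝ} (hr : 0 < r) (hrε : r < ε) :
    ∮ z in C((-1 : ℂ), r), (z + 1)⁻¹ • resolvent a z =
      -((2 * π * I : ℂ) • addOneReducedInv a) := by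
  set P := negOneSpectralProj a
  let X : ℂ → A := fun z => resolvent (negOneShift a ε) z * (1 - P)
  have hX : DifferentiableOn ℂ X (closedBall (-1) r) :=
    (differentiableOn_resolvent_negOneShift_mul hε hgap _).mono (closedBall_subset_ball hrε)
  have hpole : ContinuousOn (fun z : ℂ => (z - -1)⁻¹) (sphere (-1) r) :=
    (continuousOn_id.sub continuousOn_const).inv₀ fun z hz =>
      sub_ne_zero.mpr (ne_of_mem_sphere hz hr.ne')
  have hpole2 : ContinuousOn (fun z : ℂ => (z - -1) ^ (-2 : ℤ)) (sphere (-1) r) :=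
    (continuousOn_id.sub continuousOn_const).zpow₀ _ fun z hz =>
      Or.inl (sub_ne_zero.mpr (ne_of_mem_sphere hz hr.ne'))
  calc ∮ z in C((-1 : ℂ), r), (z + 1)⁻¹ • resolvent a z
      = ∮ z in C((-1 : ℂ), r), ((z - -1) ^ (-2 : ℤ) • P + (z - -1)⁻¹ • X z) := by
        refine circleIntegral.integral_congr hr.le fun z hz => ?_
        rw [resolvent_eq_smul_add_resolvent_negOneShift hε hgap (sphere_subset_ball hrε hz)
          (ne_of_mem_sphere hz hr.ne'), sub_neg_eq_add, smul_add, smul_smul, zpow_neg, zpow_two,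
          mul_inv]
    _ = (∮ z in C((-1 : ℂ), r), (z - -1) ^ (-2 : ℤ)) • P + (2 * π * I : ℂ) • X (-1) := by
        rw [circleIntegral.integral_add
          ((hpole2.fun_smul continuousOn_const).circleIntegrable hr.le)
          ((hpole.fun_smul (hX.continuousOn.mono sphere_subset_closedBall)).circleIntegrable hr.le),
          circleIntegral.integral_smul_const, hX.circleIntegral_sub_inv_smul (mem_ball_self hr)]
    _ = -((2 * π * I : ℂ) • addOneReducedInv a) := by
        rw [circleIntegral.integral_sub_zpow_of_ne (by norm_num), zero_smul, zero_add,
          show X (-1) = -addOneReducedInv a from resolvent_negOneShift_neg_one_mul hε hgap,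
          smul_neg]

end Riesz

section Hilbert

variable {E : Type*} [NormedAddCommGroup E] [InnerProductSpace ℂ E] [CompleteSpace E]

theorem apply_eq_zero_of_mem_orthogonal {P : E →L[ℂ] E} (hP : IsSelfAdjoint P)
    {K : Submodule ℂ E} (hrange : ∀ x, P x ∈ K) (hfix : ∀ x ∈ K, P x = x) {c : E}
    (hc : c ∈ Kᗮ) : P c = 0 := by
  rw [← inner_self_eq_zero (𝕜 := ℂ)]
  calc inner ℂ (P c) (P c) = inner ℂ c (P (P c)) := hP.isSymmetric _ _
    _ = inner ℂ c (P c) := by rw [hfix _ (hrange c)]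
    _ = 0 := Submodule.inner_left_of_mem_orthogonal (hrange c) hc

theorem eq_negOneSpectralProj {U : E →L[ℂ] E} [IsStarNormal U] {ε : ℝ} (hε : 0 < ε)
    (hgap : ∀ z ∈ spectrum ℂ U, z = -1 ∨ ε ≤ ‖z + 1‖) {P : E →L[ℂ] E}
    (hP₁ : ∀ x ∈ LinearMap.ker ((U + 1 : E →L[ℂ] E) : E →ₗ[ℂ] E), P x = x)
    (hP₂ : ∀ x ∈ (LinearMap.ker ((U + 1 : E →L[ℂ] E) : E →ₗ[ℂ] E))ᗮ, P x = 0) :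
    P = negOneSpectralProj U := by
  set K := LinearMap.ker ((U + 1 : E →L[ℂ] E) : E →ₗ[ℂ] E)
  have hrange : ∀ x, negOneSpectralProj U x ∈ K := fun x => by
    rw [LinearMap.mem_ker, ContinuousLinearMap.coe_coe, ← mul_apply_eq_comp,
      add_one_mul_negOneSpectralProj hε hgap, zero_apply]
  have hfix : ∀ x ∈ K, negOneSpectralProj U x = x := fun x hx => by
    have h := congr($(addOneReducedInv_mul_add_one hε hgap) x)
    rw [mul_apply_eq_comp, sub_apply, one_apply_eq_self] at h
    rw [← ContinuousLinearMap.coe_coe (U + 1), LinearMap.mem_ker.mp hx, map_zero] at h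
    exact (sub_eq_zero.mp h.symm).symm
  refine LinearMap.ext_on_codisjoint K.isCompl_orthogonal.codisjoint
    (fun x hx => (hP₁ x hx).trans (hfix x hx).symm) fun x hx => (hP₂ x hx).trans
    (apply_eq_zero_of_mem_orthogonal (isSelfAdjoint_negOneSpectralProj U) hrange hfix hx).symm

end Hilbert

section Restriction

variable {F G : Type*} [NormedAddCommGroup F] [NormedSpace ℂ F] [CompleteSpace F]
  [NormedAddCommGroup G] [InnerProductSpace ℂ G] [CompleteSpace G] {j : F →L[ℂ] G}
  {T : F →L[ℂ] F} {S : G →L[ℂ] G} [IsStarNormal S] (hjT : ∀ x, j (T x) = S (j x))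
  (hσ : spectrum ℂ T ⊆ spectrum ℂ S) {ε : ℝ} (hε : 0 < ε)
  (hgap : ∀ z ∈ spectrum ℂ S, z = -1 ∨ ε ≤ ‖z + 1‖)
include hjT hσ hε hgap

theorem negOneSpectralProj_mem_restrictable : negOneSpectralProj S ∈ j.restrictable := by
  have hS := sphere_subset_resolventSet_of_gap hgap (half_pos hε) (half_lt_self hε)
  have hT : sphere (-1 : ℂ) (ε / 2) ⊆ resolventSet ℂ T :=
    fun z hz => not_not.mp fun hzT => hσ hzT (hS hz)
  have h := ContinuousLinearMap.circleIntegral_smul_resolvent_mem_restrictable hjT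
    (half_pos hε).le hT hS (continuousOn_const (c := (1 : ℂ)))
  simp only [one_smul] at h
  rw [circleIntegral_resolvent hε hgap (half_pos hε) (half_lt_self hε)] at h
  have h' := j.restrictable.smul_mem h (2 * π * I : ℂ)⁻¹
  rwa [smul_smul, inv_mul_cancel₀ two_pi_I_ne_zero, one_smul] at h'

theorem addOneReducedInv_mem_restrictable : addOneReducedInv S ∈ j.restrictable := by
  have hS := sphere_subset_resolventSet_of_gap hgap (half_pos hε) (half_lt_self hε)
  have hT : sphere (-1 : ℂ) (ε / 2) ⊆ resolventSet ℂ T :=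
    fun z hz => not_not.mp fun hzT => hσ hzT (hS hz)
  have hpole : ContinuousOn (fun z : ℂ => (z + 1)⁻¹) (sphere (-1) (ε / 2)) :=
    (by fun_prop : ContinuousOn (fun z : ℂ => z + 1) _).inv₀ fun z hz => by
      rw [Ne, add_eq_zero_iff_eq_neg]; exact ne_of_mem_sphere hz (half_pos hε).ne'
  have h := ContinuousLinearMap.circleIntegral_smul_resolvent_mem_restrictable hjT
    (half_pos hε).le hT hS hpole
  rw [circleIntegral_inv_smul_resolvent hε hgap (half_pos hε) (half_lt_self hε)] at h
  have h' := j.restrictable.smul_mem h (-(2 * π * I : ℂ)⁻¹)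
  rwa [smul_neg, neg_smul, neg_neg, smul_smul, inv_mul_cancel₀ two_pi_I_ne_zero, one_smul] at h'

end Restriction

/-- Let `U` be a unitary on `E = L²(∂Ω)` with spectral gap at `-1`, whose restriction
`U₊` to `Hs = H^{1/2}(∂Ω)` (embedded in `E` via `j`) is well defined, continuous, and
has pure point spectrum.  Then the partial Cayley transform
`A_U = i P_{W⊥}(U - I)(U + I)⁻¹` and the orthogonal projection `P_W` onto
`W = ker (U + I)` leave `H^{1/2}` invariant and are continuous there; in particular `U`
is admissible. -/
theorem partialCayley_admissible {E Hs : Type*}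
    [NormedAddCommGroup E] [InnerProductSpace ℂ E] [CompleteSpace E]
    [NormedAddCommGroup Hs] [InnerProductSpace ℂ Hs] [CompleteSpace Hs]
    -- the continuous embedding `H^{1/2} ⊆ L²`
    (j : Hs →L[ℂ] E) (hj : Function.Injective j)
    -- `U` unitary on `E`
    (U : E →L[ℂ] E) (hU : star U * U = 1 ∧ U * star U = 1)
    -- `U` has spectral gap at `-1`
    (hgap : IsUnit (1 + U) ∨ ((-1 : ℂ) ∈ spectrum ℂ U ∧
      ∃ ε > (0 : ℝ), ∀ μ ∈ spectrum ℂ U, μ ≠ -1 → ε ≤ ‖μ + 1‖))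
    -- the orthogonal projection `P_W` onto `W = ker (U + I)`
    (PW : E →L[ℂ] E)
    (hPW1 : ∀ x ∈ LinearMap.ker ((U + 1 : E →L[ℂ] E) : E →ₗ[ℂ] E), PW x = x)
    (hPW2 : ∀ x ∈ (LinearMap.ker ((U + 1 : E →L[ℂ] E) : E →ₗ[ℂ] E))ᗮ, PW x = 0)
    -- the partial Cayley transform `A = i P_{W⊥}(U - I)(U + I)⁻¹`
    (A : E →L[ℂ] E)
    (hA : ∀ x : E, A ((U + 1) x) = Complex.I • ((1 - PW) ((U - 1) x)))
    (hAW : ∀ x ∈ LinearMap.ker ((U + 1 : E →L[ℂ] E) : E →ₗ[ℂ] E), A x = 0)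
    -- the restriction `U₊` of `U` to `H^{1/2}`, continuous there
    (Us : Hs →L[ℂ] Hs) (hUs : ∀ x : Hs, j (Us x) = U (j x))
    -- `U₊` has pure point spectrum
    (hpp : spectrum ℂ Us = {μ : ℂ | ∃ x : Hs, x ≠ 0 ∧ Us x = μ • x}) :
    (∃ As : Hs →L[ℂ] Hs, ∀ x : Hs, j (As x) = A (j x)) ∧
    (∃ Ps : Hs →L[ℂ] Hs, ∀ x : Hs, j (Ps x) = PW (j x)) := by
  have : IsStarNormal U := ⟨hU.1.trans hU.2.symm⟩
  obtain ⟨ε, hε, hgapε⟩ := exists_spectral_gap_neg_one (hgap.imp_right And.right)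
  have hσ : spectrum ℂ Us ⊆ spectrum ℂ U := fun μ hμ => by
    rw [hpp] at hμ
    obtain ⟨x, hx, hUx⟩ := hμ
    exact ContinuousLinearMap.mem_spectrum_of_apply_eq_smul hUs hj hx hUx
  have hPW : PW = negOneSpectralProj U := eq_negOneSpectralProj hε hgapε hPW1 hPW2
  have hPmem := negOneSpectralProj_mem_restrictable hUs hσ hε hgapε
  have hBmem := addOneReducedInv_mem_restrictable hUs hσ hε hgapε
  have hUmem : U ∈ j.restrictable := ContinuousLinearMap.mem_restrictable.mpr ⟨Us, hUs⟩
  rw [partialCayley_eq_smul_mul hA hAW (hPW ▸ add_one_mul_addOneReducedInv hε hgapε)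
    (hPW ▸ add_one_mul_negOneSpectralProj hε hgapε), hPW]
  refine ⟨ContinuousLinearMap.mem_restrictable.mp ?_, ContinuousLinearMap.mem_restrictable.mp hPmem⟩
  exact j.restrictable.smul_mem (mul_mem (mul_mem (sub_mem (one_mem _) hPmem)
    (sub_mem hUmem (one_mem _))) hBmem) I
end
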